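/- arXiv:2205.08627 — 5 statements merged into one kernel-verified Lean document; each statement's English description precedes it below -/
import Mathlib

section
/- Let d = 3, 𝕊 = {{1,2},{2,3},{1,3}} and X = [r] × [s] × [2] for some r, s ∈ ℕ. Identify families of measures with vectors of mass functions in ℝ^{X_𝕊}, where X_𝕊 = {(S, x_S) : S ∈ 𝕊, x_S ∈ X_S}, and define the cones 𝒫_𝕊^{0,*} = {λ·q : λ ≥ 0, q ∈ 𝒫_𝕊^0}, 𝒫_𝕊^{cons,*} = {λ·q : λ ≥ 0, q ∈ 𝒫_𝕊^cons} and the set 𝒫_𝕊^{cons,**} = {λ·q : λ ∈ [0,1], q ∈ 𝒫_𝕊^cons}. Then the Minkowski sum satisfies 𝒫_𝕊^{0,*} + 𝒫_𝕊^{cons,**} = { p_𝕊 ∈ 𝒫_𝕊^{cons,*} : max_{A ⊆ [r], B ⊆ [s]} (−p_{AB•} + p_{A•1} + p_{•B1} − p_{••1}) ≤ 1/2 }, where p_{AB•} = ∑_{(i,j)∈A×B} p_{{1,2}}(i,j), p_{A•1} = ∑_{i∈A} p_{{1,3}}(i,1), p_{•B1} = ∑_{j∈B} p_{{2,3}}(j,1)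 and p_{••1} = ∑_{i∈[r]} p_{{1,3}}(i,1). -/
/-- The family `(P_{{1,2}}, P_{{2,3}}, P_{{1,3}})` of pairwise mass functions on
`[r] × [s] × [u]` consists of probability mass functions. -/
def ProbTriple (r s u : ℕ) (p12 : Fin r → Fin s → ℝ) (p23 : Fin s → Fin u → ℝ)
    (p13 : Fin r → Fin u → ℝ) : Prop :=
  (∀ i j, 0 ≤ p12 i j) ∧ (∀ j k, 0 ≤ p23 j k) ∧ (∀ i k, 0 ≤ p13 i k) ∧
    (∑ i, ∑ j, p12 i j = 1) ∧ (∑ j, ∑ k, p23 j k = 1) ∧ (∑ i, ∑ k, p13 i k = 1)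

/-- Consistency of the family of pairwise margins. -/
def ConsTriple (r s u : ℕ) (p12 : Fin r → Fin s → ℝ) (p23 : Fin s → Fin u → ℝ)
    (p13 : Fin r → Fin u → ℝ) : Prop :=
  (∀ i, ∑ j, p12 i j = ∑ k, p13 i k) ∧
    (∀ j, ∑ i, p12 i j = ∑ k, p23 j k) ∧
    (∀ k, ∑ j, p23 j k = ∑ i, p13 i k)

/-- Compatibility: existence of a joint pmf on `[r] × [s] × [u]` with the given margins. -/
def CompatTriple (r s u : ℕ) (p12 : Fin r → Fin s → ℝ) (p23 : Fin s → Fin u → ℝ)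
    (p13 : Fin r → Fin u → ℝ) : Prop :=
  ∃ q : Fin r → Fin s → Fin u → ℝ,
    (∀ i j k, 0 ≤ q i j k) ∧ (∑ i, ∑ j, ∑ k, q i j k = 1) ∧
      (∀ i j, p12 i j = ∑ k, q i j k) ∧ (∀ j k, p23 j k = ∑ i, q i j k) ∧
      (∀ i k, p13 i k = ∑ j, q i j k)

/-- The incompatibility index `R(P_𝕊)` for `𝕊 = {{1,2},{2,3},{1,3}}`. -/
noncomputable def RTriple (r s u : ℕ) (p12 : Fin r → Fin s → ℝ) (p23 : Fin s → Fin u → ℝ)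
    (p13 : Fin r → Fin u → ℝ) : ℝ :=
  sSup {t | ∃ (f12 : Fin r → Fin s → ℝ) (f23 : Fin s → Fin u → ℝ) (f13 : Fin r → Fin u → ℝ),
    (∀ i j, -1 ≤ f12 i j) ∧ (∀ j k, -1 ≤ f23 j k) ∧ (∀ i k, -1 ≤ f13 i k) ∧
    (∀ i j k, 0 ≤ f12 i j + f23 j k + f13 i k) ∧
    t = -(1 / 3) * ((∑ i, ∑ j, f12 i j * p12 i j) + (∑ j, ∑ k, f23 j k * p23 j k) +
          (∑ i, ∑ k, f13 i k * p13 i k))}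

open scoped Pointwise

/-- The cone generated by the compatible families, `𝒫_𝕊^{0,*}`. -/
def compatCone (r s : ℕ) :
    Set ((Fin r → Fin s → ℝ) × (Fin s → Fin 2 → ℝ) × (Fin r → Fin 2 → ℝ)) :=
  {x | ∃ (lam : ℝ) (q : (Fin r → Fin s → ℝ) × (Fin s → Fin 2 → ℝ) × (Fin r → Fin 2 → ℝ)),
    0 ≤ lam ∧ ProbTriple r s 2 q.1 q.2.1 q.2.2 ∧ CompatTriple r s 2 q.1 q.2.1 q.2.2 ∧
      x = lam • q}

/-- The cone generated by the consistent families, `𝒫_𝕊^{cons,*}`. -/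
def consCone (r s : ℕ) :
    Set ((Fin r → Fin s → ℝ) × (Fin s → Fin 2 → ℝ) × (Fin r → Fin 2 → ℝ)) :=
  {x | ∃ (lam : ℝ) (q : (Fin r → Fin s → ℝ) × (Fin s → Fin 2 → ℝ) × (Fin r → Fin 2 → ℝ)),
    0 ≤ lam ∧ ProbTriple r s 2 q.1 q.2.1 q.2.2 ∧ ConsTriple r s 2 q.1 q.2.1 q.2.2 ∧
      x = lam • q}

/-- The "consistent ball" `𝒫_𝕊^{cons,**}`. -/
def consBall (r s : ℕ) :
    Set ((Fin r → Fin s → ℝ) × (Fin s → Fin 2 → ℝ) × (Fin r → Fin 2 → ℝ)) :=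
  {x | ∃ (lam : ℝ) (q : (Fin r → Fin s → ℝ) × (Fin s → Fin 2 → ℝ) × (Fin r → Fin 2 → ℝ)),
    0 ≤ lam ∧ lam ≤ 1 ∧ ProbTriple r s 2 q.1 q.2.1 q.2.2 ∧ ConsTriple r s 2 q.1 q.2.1 q.2.2 ∧
      x = lam • q}

/-! ### Auxiliary development -/

open Finset

namespace S8

variable {r s : ℕ}

abbrev Trip (r s : ℕ) := (Fin r → Fin s → ℝ) × (Fin s → Fin 2 → ℝ) × (Fin r → Fin 2 → ℝ)

def rsum (m : Fin r → Fin s → ℝ) (i : Fin r) : ℝ := ∑ j, m i j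
def csum (m : Fin r → Fin s → ℝ) (j : Fin s) : ℝ := ∑ i, m i j

def step (c m : Fin r → Fin s → ℝ) : (Fin r ⊕ Fin s) → (Fin r ⊕ Fin s) → Prop
  | Sum.inl i, Sum.inr j => m i j < c i j
  | Sum.inr j, Sum.inl i => 0 < m i j
  | _, _ => False

def rdec (v : Fin r ⊕ Fin s) (δ : ℝ) (i : Fin r) : ℝ :=
  match v with | Sum.inl i' => if i = i' then δ else 0 | Sum.inr _ => 0

def cinc (v : Fin r ⊕ Fin s) (δ : ℝ) (j : Fin s) : ℝ :=
  match v with | Sum.inr j' => if j = j' then δ else 0 | Sum.inl _ => 0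

lemma augment (c m : Fin r → Fin s → ℝ) (i₀ : Fin r)
    (hm0 : ∀ i j, 0 ≤ m i j) (hmc : ∀ i j, m i j ≤ c i j) :
    ∀ v, Relation.ReflTransGen (step c m) (Sum.inl i₀) v →
    ∃ C : ℝ, 0 ≤ C ∧ ∃ δ₀ : ℝ, 0 < δ₀ ∧ ∀ δ : ℝ, 0 < δ → δ ≤ δ₀ →
      ∃ m' : Fin r → Fin s → ℝ,
        (∀ i j, 0 ≤ m' i j) ∧ (∀ i j, m' i j ≤ c i j) ∧
        (∀ i j, |m' i j - m i j| ≤ C * δ) ∧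
        (∀ i, rsum m' i = rsum m i + (if i = i₀ then δ else 0) - rdec v δ i) ∧
        (∀ j, csum m' j = csum m j + cinc v δ j) := by
  intro v hv
  induction hv with
  | refl =>
    refine ⟨0, le_refl 0, 1, one_pos, fun δ hδ hδ1 => ⟨m, hm0, hmc, ?_, ?_, ?_⟩⟩
    · intro i j; simp
    · intro i; simp [rdec]
    · intro j; simp [cinc]
  | tail hab hbc ih =>
    rename_i bv cv
    rcases bv with iB | jB <;> rcases cv with iC | jC
    · exact absurd hbc (by simp [step])
    · -- forward step: iB → jC, with m iB jC < c iB jC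
      have hlt : m iB jC < c iB jC := hbc
      obtain ⟨C, hC, δ₀, hδ₀, H⟩ := ih
      refine ⟨C + 1, by linarith, min δ₀ ((c iB jC - m iB jC) / (C + 1)),
        lt_min hδ₀ (div_pos (by linarith) (by linarith)), fun δ hδ hδle => ?_⟩
      obtain ⟨m', h0, hcb, hcl, hr, hcs⟩ := H δ hδ (hδle.trans (min_le_left _ _))
      have hδ2 : (C + 1) * δ ≤ c iB jC - m iB jC := by
        calc (C+1)*δ ≤ (C+1) * ((c iB jC - m iB jC) / (C + 1)) :=
              mul_le_mul_of_nonneg_left (hδle.trans (min_le_right _ _)) (by linarith)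
          _ = c iB jC - m iB jC := by field_simp
      refine ⟨fun a b => m' a b + (if a = iB ∧ b = jC then δ else 0), ?_, ?_, ?_, ?_, ?_⟩
      · intro a b; dsimp only; have := h0 a b; split <;> linarith
      · intro a b; dsimp only
        by_cases h : a = iB ∧ b = jC
        · rw [if_pos h]
          obtain ⟨rfl, rfl⟩ := h
          have h1 := (abs_le.mp (hcl a b)).2
          linarith
        · rw [if_neg h, add_zero]; exact hcb a b
      · intro a b; dsimp only
        by_cases h : a = iB ∧ b = jC
        · rw [if_pos h, abs_le]
          have h1 := abs_le.mp (hcl a b)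
          constructor <;> nlinarith [h1.1, h1.2]
        · rw [if_neg h, add_zero]
          exact (hcl a b).trans (by nlinarith)
      · intro a
        have key : rsum (fun a b => m' a b + (if a = iB ∧ b = jC then δ else 0)) a
            = rsum m' a + (if a = iB then δ else 0) := by
          unfold rsum
          rw [Finset.sum_add_distrib]
          congr 1
          by_cases h : a = iB <;> simp [h]
        rw [key, hr a]
        simp only [rdec]
        ring
      · intro b
        have key : csum (fun a b => m' a b + (if a = iB ∧ b = jC then δ else 0)) b
            = csum m' b + (if b = jC then δ else 0) := by
          unfold csum
          rw [Finset.sum_add_distrib]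
          congr 1
          by_cases h : b = jC <;> simp [h]
        rw [key, hcs b]
        simp only [cinc]
        ring
    · -- backward step: jB → iC, with 0 < m iC jB
      have hlt : 0 < m iC jB := hbc
      obtain ⟨C, hC, δ₀, hδ₀, H⟩ := ih
      refine ⟨C + 1, by linarith, min δ₀ ((m iC jB) / (C + 1)),
        lt_min hδ₀ (div_pos (by linarith) (by linarith)), fun δ hδ hδle => ?_⟩
      obtain ⟨m', h0, hcb, hcl, hr, hcs⟩ := H δ hδ (hδle.trans (min_le_left _ _))
      have hδ2 : (C + 1) * δ ≤ m iC jB := by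
        calc (C+1)*δ ≤ (C+1) * ((m iC jB) / (C + 1)) :=
              mul_le_mul_of_nonneg_left (hδle.trans (min_le_right _ _)) (by linarith)
          _ = m iC jB := by field_simp
      refine ⟨fun a b => m' a b - (if a = iC ∧ b = jB then δ else 0), ?_, ?_, ?_, ?_, ?_⟩
      · intro a b; dsimp only
        by_cases h : a = iC ∧ b = jB
        · rw [if_pos h]
          obtain ⟨rfl, rfl⟩ := h
          have h1 := (abs_le.mp (hcl a b)).1
          linarith
        · rw [if_neg h, sub_zero]; exact h0 a b
      · intro a b; dsimp only; have := hcb a b; split <;> linarith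
      · intro a b; dsimp only
        by_cases h : a = iC ∧ b = jB
        · rw [if_pos h, abs_le]
          have h1 := abs_le.mp (hcl a b)
          constructor <;> nlinarith [h1.1, h1.2]
        · rw [if_neg h, sub_zero]
          exact (hcl a b).trans (by nlinarith)
      · intro a
        have key : rsum (fun a b => m' a b - (if a = iC ∧ b = jB then δ else 0)) a
            = rsum m' a - (if a = iC then δ else 0) := by
          unfold rsum
          rw [Finset.sum_sub_distrib]
          congr 1
          by_cases h : a = iC <;> simp [h]
        rw [key, hr a]
        simp only [rdec]
        ring
      · intro b
        have key : csum (fun a b => m' a b - (if a = iC ∧ b = jB then δ else 0)) b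
            = csum m' b - (if b = jB then δ else 0) := by
          unfold csum
          rw [Finset.sum_sub_distrib]
          congr 1
          by_cases h : b = jB <;> simp [h]
        rw [key, hcs b]
        simp only [cinc]
        ring
    · exact absurd hbc (by simp [step])


lemma maxflow (c : Fin r → Fin s → ℝ) (a : Fin r → ℝ) (b : Fin s → ℝ)
    (hc : ∀ i j, 0 ≤ c i j) (ha : ∀ i, 0 ≤ a i) (hb : ∀ j, 0 ≤ b j) :
    ∃ m : Fin r → Fin s → ℝ, ∃ A : Finset (Fin r), ∃ B : Finset (Fin s),
      (∀ i j, 0 ≤ m i j) ∧ (∀ i j, m i j ≤ c i j) ∧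
      (∀ i, rsum m i ≤ a i) ∧ (∀ j, csum m j ≤ b j) ∧
      (∀ i, i ∉ A → rsum m i = a i) ∧
      (∀ j ∈ B, csum m j = b j) ∧
      (∀ i ∈ A, ∀ j, j ∉ B → m i j = c i j) ∧
      (∀ i, i ∉ A → ∀ j ∈ B, m i j = 0) := by
  classical
  set K : Set (Fin r → Fin s → ℝ) :=
    {m | (∀ i j, 0 ≤ m i j) ∧ (∀ i j, m i j ≤ c i j) ∧
      (∀ i, rsum m i ≤ a i) ∧ (∀ j, csum m j ≤ b j)} with hKdef
  have hKne : K.Nonempty := by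
    refine ⟨fun _ _ => 0, fun i j => le_refl 0, fun i j => hc i j, ?_, ?_⟩ <;>
      intro x <;> simp [rsum, csum] <;> [exact ha x; exact hb x]
  have hKcl : IsClosed K := by
    have h1 : K = (⋂ i, ⋂ j, {m : Fin r → Fin s → ℝ | 0 ≤ m i j}) ∩
        ((⋂ i, ⋂ j, {m : Fin r → Fin s → ℝ | m i j ≤ c i j}) ∩
        ((⋂ i, {m : Fin r → Fin s → ℝ | rsum m i ≤ a i}) ∩
        (⋂ j, {m : Fin r → Fin s → ℝ | csum m j ≤ b j}))) := by
      ext m; simp [hKdef, Set.mem_iInter, forall_and]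
    have hev : ∀ (i : Fin r) (j : Fin s),
        Continuous (fun m : Fin r → Fin s → ℝ => m i j) :=
      fun i j => (continuous_apply j).comp (continuous_apply i)
    have hrs : ∀ i, Continuous (fun m : Fin r → Fin s → ℝ => rsum m i) := by
      intro i; exact continuous_finset_sum _ fun j _ => hev i j
    have hcs : ∀ j, Continuous (fun m : Fin r → Fin s → ℝ => csum m j) := by
      intro j; exact continuous_finset_sum _ fun i _ => hev i j
    rw [h1]
    refine (isClosed_iInter fun i => isClosed_iInter fun j =>
        isClosed_le continuous_const (hev i j)).inter
      ((isClosed_iInter fun i => isClosed_iInter fun j =>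
        isClosed_le (hev i j) continuous_const).inter
      ((isClosed_iInter fun i => isClosed_le (hrs i) continuous_const).inter
        (isClosed_iInter fun j => isClosed_le (hcs j) continuous_const)))
  have hKcpt : IsCompact K := by
    refine IsCompact.of_isClosed_subset
      (isCompact_univ_pi fun i => isCompact_univ_pi fun j => isCompact_Icc
        (a := (0:ℝ)) (b := c i j)) hKcl ?_
    intro m hm
    simp only [Set.mem_pi, Set.mem_univ, forall_true_left, Set.mem_Icc]
    intro i j
    exact ⟨hm.1 i j, hm.2.1 i j⟩
  have hTc : Continuous (fun m : Fin r → Fin s → ℝ => ∑ i, rsum m i) :=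
    continuous_finset_sum _ fun i _ =>
      continuous_finset_sum _ fun j _ => (continuous_apply j).comp (continuous_apply i)
  obtain ⟨m, hmK, hmax⟩ := hKcpt.exists_isMaxOn hKne hTc.continuousOn
  obtain ⟨hm0, hmc, hma, hmb⟩ := hmK
  -- reachability
  set Reach : (Fin r ⊕ Fin s) → Prop := fun v =>
    ∃ i₀, rsum m i₀ < a i₀ ∧ Relation.ReflTransGen (step c m) (Sum.inl i₀) v with hReach
  -- saturation of reachable columns
  have hsat : ∀ j, Reach (Sum.inr j) → csum m j = b j := by
    intro j ⟨i₀, hi₀, hrch⟩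
    by_contra hne
    have hjlt : csum m j < b j := lt_of_le_of_ne (hmb j) hne
    obtain ⟨C, hC, δ₀, hδ₀, H⟩ := augment c m i₀ hm0 hmc _ hrch
    set δ := min δ₀ (min (a i₀ - rsum m i₀) (b j - csum m j)) with hδdef
    have hδpos : 0 < δ := lt_min hδ₀ (lt_min (by linarith) (by linarith))
    obtain ⟨m', h0, hcb, _, hr, hcs⟩ := H δ hδpos (min_le_left _ _)
    have hr' : ∀ i, rsum m' i = rsum m i + (if i = i₀ then δ else 0) := by
      intro i; have h := hr i; simpa [rdec] using h
    have hcs' : ∀ j'', csum m' j'' = csum m j'' + (if j'' = j then δ else 0) := by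
      intro j''; have h := hcs j''; simpa [cinc] using h
    have hm'K : m' ∈ K := by
      refine ⟨h0, hcb, ?_, ?_⟩
      · intro i
        rw [hr' i]
        split_ifs with h
        · subst h
          have : δ ≤ a i - rsum m i := (min_le_right _ _).trans (min_le_left _ _)
          linarith
        · have := hma i; linarith
      · intro j''
        rw [hcs' j'']
        split_ifs with h
        · subst h
          have : δ ≤ b j'' - csum m j'' := (min_le_right _ _).trans (min_le_right _ _)
          linarith
        · have := hmb j''; linarith
    have hT : ∑ i, rsum m' i = (∑ i, rsum m i) + δ := by
      rw [Finset.sum_congr rfl (fun i _ => hr' i), Finset.sum_add_distrib]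
      simp
    have := hmax hm'K
    simp only [Set.mem_setOf_eq] at this
    rw [hT] at this
    linarith
  set A : Finset (Fin r) := Finset.univ.filter (fun i => Reach (Sum.inl i)) with hA
  set B : Finset (Fin s) := Finset.univ.filter (fun j => Reach (Sum.inr j)) with hB
  refine ⟨m, A, B, hm0, hmc, hma, hmb, ?_, ?_, ?_, ?_⟩
  · intro i hiA
    rcases eq_or_lt_of_le (hma i) with h | h
    · exact h.symm ▸ rfl
    · exact absurd (Finset.mem_filter.mpr ⟨Finset.mem_univ i, ⟨i, h, .refl⟩⟩) hiA
  · intro j hjB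
    exact hsat j (Finset.mem_filter.mp hjB).2
  · intro i hiA j hjB
    obtain ⟨i₀, hi₀, hrch⟩ := (Finset.mem_filter.mp hiA).2
    rcases eq_or_lt_of_le (hmc i j) with h | h
    · exact h
    · exact absurd (Finset.mem_filter.mpr ⟨Finset.mem_univ j,
        ⟨i₀, hi₀, hrch.tail (show step c m (Sum.inl i) (Sum.inr j) from h)⟩⟩) hjB
  · intro i hiA j hjB
    obtain ⟨i₀, hi₀, hrch⟩ := (Finset.mem_filter.mp hjB).2
    rcases eq_or_lt_of_le (hm0 i j) with h | h
    · exact h.symm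
    · exact absurd (Finset.mem_filter.mpr ⟨Finset.mem_univ i,
        ⟨i₀, hi₀, hrch.tail (show step c m (Sum.inr j) (Sum.inl i) from h)⟩⟩) hiA


/-- uniform consistent and compatible probability triple -/
noncomputable def unif (r s : ℕ) : Trip r s :=
  (fun _ _ => ((r : ℝ) * s)⁻¹, fun _ _ => (2 * (s : ℝ))⁻¹, fun _ _ => (2 * (r : ℝ))⁻¹)

lemma unif_prob (hr : 0 < r) (hs : 0 < s) :
    ProbTriple r s 2 (unif r s).1 (unif r s).2.1 (unif r s).2.2 := by
  have hr' : (r : ℝ) ≠ 0 := Nat.cast_ne_zero.mpr hr.ne'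
  have hs' : (s : ℝ) ≠ 0 := Nat.cast_ne_zero.mpr hs.ne'
  refine ⟨fun i j => by unfold unif; positivity, fun j k => by unfold unif; positivity,
    fun i k => by unfold unif; positivity, ?_, ?_, ?_⟩ <;>
    simp [unif, Finset.sum_const, Finset.card_univ] <;> field_simp <;> ring

lemma unif_cons (hr : 0 < r) (hs : 0 < s) :
    ConsTriple r s 2 (unif r s).1 (unif r s).2.1 (unif r s).2.2 := by
  have hr' : (r : ℝ) ≠ 0 := Nat.cast_ne_zero.mpr hr.ne'
  have hs' : (s : ℝ) ≠ 0 := Nat.cast_ne_zero.mpr hs.ne'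
  refine ⟨fun i => ?_, fun j => ?_, fun k => ?_⟩ <;>
    simp [unif, Finset.sum_const, Finset.card_univ] <;> field_simp <;> ring

lemma unif_compat (hr : 0 < r) (hs : 0 < s) :
    CompatTriple r s 2 (unif r s).1 (unif r s).2.1 (unif r s).2.2 := by
  have hr' : (r : ℝ) ≠ 0 := Nat.cast_ne_zero.mpr hr.ne'
  have hs' : (s : ℝ) ≠ 0 := Nat.cast_ne_zero.mpr hs.ne'
  refine ⟨fun _ _ _ => ((r : ℝ) * s * 2)⁻¹, fun i j k => by positivity, ?_, ?_, ?_, ?_⟩ <;>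
    simp [unif, Finset.sum_const, Finset.card_univ] <;> intros <;> field_simp <;> ring

lemma mem_consCone (hr : 0 < r) (hs : 0 < s) (x : Trip r s)
    (h1 : ∀ i j, 0 ≤ x.1 i j) (h2 : ∀ j k, 0 ≤ x.2.1 j k) (h3 : ∀ i k, 0 ≤ x.2.2 i k)
    (hcons : ConsTriple r s 2 x.1 x.2.1 x.2.2) : x ∈ consCone r s := by
  obtain ⟨hc1, hc2, hc3⟩ := hcons
  set lam : ℝ := ∑ i, ∑ j, x.1 i j with hlam
  have hlam0 : 0 ≤ lam := Finset.sum_nonneg fun i _ => Finset.sum_nonneg fun j _ => h1 i j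
  have hm23 : ∑ j, ∑ k, x.2.1 j k = lam := by
    have h : ∑ j, ∑ k, x.2.1 j k = ∑ j, ∑ i, x.1 i j :=
      Finset.sum_congr rfl fun j _ => (hc2 j).symm
    rw [h, hlam, Finset.sum_comm]
  have hm13 : ∑ i, ∑ k, x.2.2 i k = lam := by
    rw [hlam]
    exact (Finset.sum_congr rfl fun i _ => hc1 i).symm
  rcases eq_or_lt_of_le hlam0 with hl | hl
  · have hrow : ∀ i, ∑ j, x.1 i j = 0 := fun i =>
      (Finset.sum_eq_zero_iff_of_nonneg
        (fun i _ => Finset.sum_nonneg fun j _ => h1 i j)).mp hl.symm i (mem_univ i)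
    have h12z : ∀ i j, x.1 i j = 0 := fun i j =>
      (Finset.sum_eq_zero_iff_of_nonneg (fun j _ => h1 i j)).mp (hrow i) j (mem_univ j)
    have h13z : ∀ i k, x.2.2 i k = 0 := by
      intro i k
      have : ∑ k, x.2.2 i k = 0 := by rw [← hc1 i]; exact hrow i
      exact (Finset.sum_eq_zero_iff_of_nonneg (fun k _ => h3 i k)).mp this k (mem_univ k)
    have h23z : ∀ j k, x.2.1 j k = 0 := by
      intro j k
      have hcol : ∑ k, x.2.1 j k = 0 := by
        rw [← hc2 j]
        exact Finset.sum_eq_zero fun i _ => h12z i j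
      exact (Finset.sum_eq_zero_iff_of_nonneg (fun k _ => h2 j k)).mp hcol k (mem_univ k)
    refine ⟨0, unif r s, le_refl 0, unif_prob hr hs, unif_cons hr hs, ?_⟩
    rw [zero_smul]
    refine Prod.ext ?_ (Prod.ext ?_ ?_)
    · funext i j; exact h12z i j
    · funext j k; exact h23z j k
    · funext i k; exact h13z i k
  · have hlne : lam ≠ 0 := hl.ne'
    refine ⟨lam, lam⁻¹ • x, hlam0, ?_, ?_, ?_⟩
    · refine ⟨fun i j => ?_, fun j k => ?_, fun i k => ?_, ?_, ?_, ?_⟩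
      · simp only [Prod.smul_fst, Pi.smul_apply, smul_eq_mul]
        exact mul_nonneg (inv_nonneg.mpr hlam0) (h1 i j)
      · simp only [Prod.smul_snd, Prod.smul_fst, Pi.smul_apply, smul_eq_mul]
        exact mul_nonneg (inv_nonneg.mpr hlam0) (h2 j k)
      · simp only [Prod.smul_snd, Pi.smul_apply, smul_eq_mul]
        exact mul_nonneg (inv_nonneg.mpr hlam0) (h3 i k)
      · simp only [Prod.smul_fst, Pi.smul_apply, smul_eq_mul, ← Finset.mul_sum]
        rw [← hlam, inv_mul_cancel₀ hlne]
      · simp only [Prod.smul_snd, Prod.smul_fst, Pi.smul_apply, smul_eq_mul, ← Finset.mul_sum]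
        rw [hm23, inv_mul_cancel₀ hlne]
      · simp only [Prod.smul_snd, Pi.smul_apply, smul_eq_mul, ← Finset.mul_sum]
        rw [hm13, inv_mul_cancel₀ hlne]
    · refine ⟨fun i => ?_, fun j => ?_, fun k => ?_⟩
      · simp only [Prod.smul_fst, Prod.smul_snd, Pi.smul_apply, smul_eq_mul, ← Finset.mul_sum]
        rw [hc1 i]
      · simp only [Prod.smul_fst, Prod.smul_snd, Pi.smul_apply, smul_eq_mul, ← Finset.mul_sum]
        rw [hc2 j]
      · simp only [Prod.smul_fst, Prod.smul_snd, Pi.smul_apply, smul_eq_mul, ← Finset.mul_sum]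
        rw [hc3 k]
    · rw [smul_smul, mul_inv_cancel₀ hlne, one_smul]

lemma mem_consBall (hr : 0 < r) (hs : 0 < s) (x : Trip r s)
    (h1 : ∀ i j, 0 ≤ x.1 i j) (h2 : ∀ j k, 0 ≤ x.2.1 j k) (h3 : ∀ i k, 0 ≤ x.2.2 i k)
    (hcons : ConsTriple r s 2 x.1 x.2.1 x.2.2)
    (hmass : ∑ i, ∑ j, x.1 i j ≤ 1) : x ∈ consBall r s := by
  obtain ⟨lam, q, hlam0, hq1, hq2, hxq⟩ := mem_consCone hr hs x h1 h2 h3 hcons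
  refine ⟨lam, q, hlam0, ?_, hq1, hq2, hxq⟩
  have : ∑ i, ∑ j, x.1 i j = lam := by
    rw [hxq]
    simp only [Prod.smul_fst, Pi.smul_apply, smul_eq_mul, ← Finset.mul_sum]
    rw [hq1.2.2.2.1, mul_one]
  linarith

lemma mem_compatCone (hr : 0 < r) (hs : 0 < s) (Q : Fin r → Fin s → Fin 2 → ℝ)
    (hQ : ∀ i j k, 0 ≤ Q i j k) :
    ((fun i j => ∑ k, Q i j k, fun j k => ∑ i, Q i j k, fun i k => ∑ j, Q i j k) :
      Trip r s) ∈ compatCone r s := by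
  set lam : ℝ := ∑ i, ∑ j, ∑ k, Q i j k with hlam
  have hlam0 : 0 ≤ lam := Finset.sum_nonneg fun i _ => Finset.sum_nonneg fun j _ =>
    Finset.sum_nonneg fun k _ => hQ i j k
  have hperm1 : ∀ (f : Fin r → Fin s → Fin 2 → ℝ),
      ∑ j, ∑ k, ∑ i, f i j k = ∑ i, ∑ j, ∑ k, f i j k := by
    intro f
    calc ∑ j, ∑ k, ∑ i, f i j k = ∑ j, ∑ i, ∑ k, f i j k :=
          Finset.sum_congr rfl fun j _ => Finset.sum_comm
      _ = ∑ i, ∑ j, ∑ k, f i j k := Finset.sum_comm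
  have hperm2 : ∀ (f : Fin r → Fin s → Fin 2 → ℝ),
      ∑ i, ∑ k, ∑ j, f i j k = ∑ i, ∑ j, ∑ k, f i j k :=
    fun f => Finset.sum_congr rfl fun i _ => Finset.sum_comm
  rcases eq_or_lt_of_le hlam0 with hl | hl
  · have h1 : ∀ i, ∑ j, ∑ k, Q i j k = 0 := fun i =>
      (Finset.sum_eq_zero_iff_of_nonneg (fun i _ => Finset.sum_nonneg fun j _ =>
        Finset.sum_nonneg fun k _ => hQ i j k)).mp hl.symm i (mem_univ i)
    have h2 : ∀ i j, ∑ k, Q i j k = 0 := fun i j =>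
      (Finset.sum_eq_zero_iff_of_nonneg (fun j _ => Finset.sum_nonneg fun k _ =>
        hQ i j k)).mp (h1 i) j (mem_univ j)
    have h3 : ∀ i j k, Q i j k = 0 := fun i j k =>
      (Finset.sum_eq_zero_iff_of_nonneg (fun k _ => hQ i j k)).mp (h2 i j) k (mem_univ k)
    refine ⟨0, unif r s, le_refl 0, unif_prob hr hs, unif_compat hr hs, ?_⟩
    rw [zero_smul]
    refine Prod.ext ?_ (Prod.ext ?_ ?_)
    · funext i j
      show (∑ k, Q i j k) = (0 : ℝ)
      exact Finset.sum_eq_zero fun k _ => h3 i j k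
    · funext j k
      show (∑ i, Q i j k) = (0 : ℝ)
      exact Finset.sum_eq_zero fun i _ => h3 i j k
    · funext i k
      show (∑ j, Q i j k) = (0 : ℝ)
      exact Finset.sum_eq_zero fun j _ => h3 i j k
  · have hlne : lam ≠ 0 := hl.ne'
    set Q' : Fin r → Fin s → Fin 2 → ℝ := fun i j k => Q i j k / lam with hQ'
    have hQ'0 : ∀ i j k, 0 ≤ Q' i j k := fun i j k => div_nonneg (hQ i j k) hlam0
    have hQ't : ∑ i, ∑ j, ∑ k, Q' i j k = 1 := by
      simp only [hQ', ← Finset.sum_div]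
      rw [← hlam, div_self hlne]
    refine ⟨lam, (fun i j => ∑ k, Q' i j k, fun j k => ∑ i, Q' i j k,
      fun i k => ∑ j, Q' i j k), hlam0, ?_, ?_, ?_⟩
    · refine ⟨?_, ?_, ?_, hQ't, ?_, ?_⟩
      · intro i j; dsimp only; exact Finset.sum_nonneg fun k _ => hQ'0 i j k
      · intro j k; dsimp only; exact Finset.sum_nonneg fun i _ => hQ'0 i j k
      · intro i k; dsimp only; exact Finset.sum_nonneg fun j _ => hQ'0 i j k
      · rw [hperm1 Q']; exact hQ't
      · rw [hperm2 Q']; exact hQ't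
    · exact ⟨Q', hQ'0, hQ't, fun i j => rfl, fun j k => rfl, fun i k => rfl⟩
    · refine Prod.ext ?_ (Prod.ext ?_ ?_)
      · funext i j
        show (∑ k, Q i j k) = lam * ∑ k, Q' i j k
        simp only [hQ', ← Finset.sum_div]
        rw [mul_div_cancel₀ _ hlne]
      · funext j k
        show (∑ i, Q i j k) = lam * ∑ i, Q' i j k
        simp only [hQ', ← Finset.sum_div]
        rw [mul_div_cancel₀ _ hlne]
      · funext i k
        show (∑ j, Q i j k) = lam * ∑ j, Q' i j k
        simp only [hQ', ← Finset.sum_div]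
        rw [mul_div_cancel₀ _ hlne]

lemma compat_cons {u : ℕ} (p12 : Fin r → Fin s → ℝ) (p23 : Fin s → Fin u → ℝ)
    (p13 : Fin r → Fin u → ℝ) (h : CompatTriple r s u p12 p23 p13) :
    ConsTriple r s u p12 p23 p13 := by
  obtain ⟨q, hq0, hqt, h12, h23, h13⟩ := h
  refine ⟨fun i => ?_, fun j => ?_, fun k => ?_⟩
  · rw [Finset.sum_congr rfl fun j _ => h12 i j, Finset.sum_congr rfl fun k _ => h13 i k,
      Finset.sum_comm]
  · rw [Finset.sum_congr rfl fun i _ => h12 i j, Finset.sum_congr rfl fun k _ => h23 j k,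
      Finset.sum_comm]
  · rw [Finset.sum_congr rfl fun j _ => h23 j k, Finset.sum_congr rfl fun i _ => h13 i k,
      Finset.sum_comm]

lemma cons_smul (lam : ℝ) (q : Trip r s) (h : ConsTriple r s 2 q.1 q.2.1 q.2.2) :
    ConsTriple r s 2 (lam • q).1 (lam • q).2.1 (lam • q).2.2 := by
  obtain ⟨h1, h2, h3⟩ := h
  refine ⟨fun i => ?_, fun j => ?_, fun k => ?_⟩ <;>
    simp only [Prod.smul_fst, Prod.smul_snd, Pi.smul_apply, smul_eq_mul, ← Finset.mul_sum]
  exacts [by rw [h1 i], by rw [h2 j], by rw [h3 k]]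

lemma cons_add (xx yy : Trip r s) (hx : ConsTriple r s 2 xx.1 xx.2.1 xx.2.2)
    (hy : ConsTriple r s 2 yy.1 yy.2.1 yy.2.2) :
    ConsTriple r s 2 (xx + yy).1 (xx + yy).2.1 (xx + yy).2.2 := by
  refine ⟨fun i => ?_, fun j => ?_, fun k => ?_⟩ <;>
    simp only [Prod.fst_add, Prod.snd_add, Pi.add_apply, Finset.sum_add_distrib]
  exacts [by rw [hx.1 i, hy.1 i], by rw [hx.2.1 j, hy.2.1 j], by rw [hx.2.2 k, hy.2.2 k]]

lemma cons_half (q12 : Fin r → Fin s → ℝ) (q23 : Fin s → Fin 2 → ℝ) (q13 : Fin r → Fin 2 → ℝ)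
    (hP : ProbTriple r s 2 q12 q23 q13) (hC : ConsTriple r s 2 q12 q23 q13)
    (A : Finset (Fin r)) (B : Finset (Fin s)) :
    -(∑ i ∈ A, ∑ j ∈ B, q12 i j) + (∑ i ∈ A, q13 i 0) + (∑ j ∈ B, q23 j 0) -
      (∑ i, q13 i 0) ≤ 1 / 2 := by
  classical
  obtain ⟨h120, h230, h130, h12t, h23t, h13t⟩ := hP
  obtain ⟨hc1, hc2, hc3⟩ := hC
  set α : ℝ := ∑ i ∈ A, ∑ j, q12 i j with hα
  set β : ℝ := ∑ j ∈ B, ∑ i, q12 i j with hβ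
  set t : ℝ := ∑ i ∈ A, ∑ j ∈ B, q12 i j with ht
  have h1 : ∑ i ∈ A, q13 i 0 ≤ α := by
    refine Finset.sum_le_sum fun i _ => ?_
    rw [hc1 i, Fin.sum_univ_two]
    have := h130 i 1; linarith
  have h2 : ∑ j ∈ B, q23 j 0 ≤ β := by
    refine Finset.sum_le_sum fun j _ => ?_
    rw [hc2 j, Fin.sum_univ_two]
    have := h230 j 1; linarith
  have h3 : ∑ i ∈ A, q13 i 0 ≤ ∑ i, q13 i 0 :=
    Finset.sum_le_sum_of_subset_of_nonneg (Finset.subset_univ A) fun i _ _ => h130 i 0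
  have h4 : ∑ j ∈ B, q23 j 0 ≤ ∑ i, q13 i 0 := by
    rw [← hc3 0]
    exact Finset.sum_le_sum_of_subset_of_nonneg (Finset.subset_univ B) fun j _ _ => h230 j 0
  have h5 : 0 ≤ t := Finset.sum_nonneg fun i _ => Finset.sum_nonneg fun j _ => h120 i j
  have hsplit : ∀ i, ∑ j, q12 i j = ∑ j ∈ B, q12 i j + ∑ j ∈ Bᶜ, q12 i j :=
    fun i => (Finset.sum_add_sum_compl B _).symm
  have h6 : α - t = ∑ i ∈ A, ∑ j ∈ Bᶜ, q12 i j := by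
    rw [hα, ht, ← Finset.sum_sub_distrib]
    exact Finset.sum_congr rfl fun i _ => by rw [hsplit i]; ring
  have h7 : ∑ i ∈ A, ∑ j ∈ Bᶜ, q12 i j ≤ ∑ i, ∑ j ∈ Bᶜ, q12 i j :=
    Finset.sum_le_sum_of_subset_of_nonneg (Finset.subset_univ A)
      fun i _ _ => Finset.sum_nonneg fun j _ => h120 i j
  have h8 : ∑ i, ∑ j ∈ Bᶜ, q12 i j = 1 - β := by
    have : (∑ j ∈ B, ∑ i, q12 i j) + (∑ j ∈ Bᶜ, ∑ i, q12 i j) = 1 := by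
      rw [Finset.sum_add_sum_compl, Finset.sum_comm, h12t]
    rw [Finset.sum_comm]
    rw [hβ]; linarith
  have h9 : t ≥ α + β - 1 := by
    have := h7; rw [← h6, h8] at this; linarith
  by_cases hcase : α + β ≤ 1
  · linarith
  · linarith

lemma expr_joint_le (Q : Fin r → Fin s → Fin 2 → ℝ) (hQ : ∀ i j k, 0 ≤ Q i j k)
    (A : Finset (Fin r)) (B : Finset (Fin s)) :
    -(∑ i ∈ A, ∑ j ∈ B, ∑ k, Q i j k) + (∑ i ∈ A, ∑ j, Q i j 0)
      + (∑ j ∈ B, ∑ i, Q i j 0) - (∑ i, ∑ j, Q i j 0) ≤ 0 := by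
  classical
  have key : ∀ i j, Q i j 0 ≤ ∑ k, Q i j k := by
    intro i j; rw [Fin.sum_univ_two]; have := hQ i j 1; linarith
  have hstep1 : ∑ i ∈ A, ∑ j ∈ B, Q i j 0 ≤ ∑ i ∈ A, ∑ j ∈ B, ∑ k, Q i j k :=
    Finset.sum_le_sum fun i _ => Finset.sum_le_sum fun j _ => key i j
  have hrowA : ∑ i ∈ A, ∑ j, Q i j 0
      = ∑ i ∈ A, ∑ j ∈ B, Q i j 0 + ∑ i ∈ A, ∑ j ∈ Bᶜ, Q i j 0 := by
    rw [← Finset.sum_add_distrib]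
    exact Finset.sum_congr rfl fun i _ => (Finset.sum_add_sum_compl B _).symm
  have hrowAc : ∑ i ∈ Aᶜ, ∑ j, Q i j 0
      = ∑ i ∈ Aᶜ, ∑ j ∈ B, Q i j 0 + ∑ i ∈ Aᶜ, ∑ j ∈ Bᶜ, Q i j 0 := by
    rw [← Finset.sum_add_distrib]
    exact Finset.sum_congr rfl fun i _ => (Finset.sum_add_sum_compl B _).symm
  have htot : ∑ i, ∑ j, Q i j 0
      = ∑ i ∈ A, ∑ j, Q i j 0 + ∑ i ∈ Aᶜ, ∑ j, Q i j 0 :=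
    (Finset.sum_add_sum_compl A _).symm
  have hcolB : ∑ j ∈ B, ∑ i, Q i j 0
      = ∑ i ∈ A, ∑ j ∈ B, Q i j 0 + ∑ i ∈ Aᶜ, ∑ j ∈ B, Q i j 0 := by
    rw [Finset.sum_comm]
    exact (Finset.sum_add_sum_compl A _).symm
  have hpos : 0 ≤ ∑ i ∈ Aᶜ, ∑ j ∈ Bᶜ, Q i j 0 :=
    Finset.sum_nonneg fun i _ => Finset.sum_nonneg fun j _ => hQ i j 0
  linarith

end S8

open S8 in
/-- halfspace representation of the Minkowski sum
`𝒫_𝕊^{0,*} + 𝒫_𝕊^{cons,**}` on `[r] × [s] × [2]`. The value `1 ∈ [2]` is `(0 : Fin 2)`. -/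
theorem statement_8 (r s : ℕ) (hr : 0 < r) (hs : 0 < s) :
    compatCone r s + consBall r s =
      {x ∈ consCone r s | ∀ (A : Finset (Fin r)) (B : Finset (Fin s)),
        -(∑ i ∈ A, ∑ j ∈ B, x.1 i j) + (∑ i ∈ A, x.2.2 i 0) + (∑ j ∈ B, x.2.1 j 0) -
            (∑ i, x.2.2 i 0) ≤ 1 / 2} := by
  classical
  ext x
  simp only [Set.mem_add, Set.mem_setOf_eq]
  constructor
  · -- easy direction
    rintro ⟨y, hy, z, hz, hyz⟩
    obtain ⟨lamY, qY, hlY, hPY, hCmY, hyq⟩ := hy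
    obtain ⟨lamZ, qZ, hlZ0, hlZ1, hPZ, hCZ, hzq⟩ := hz
    obtain ⟨qj, hqj0, hqjt, hqj12, hqj23, hqj13⟩ := hCmY
    subst hyz
    have hCY : ConsTriple r s 2 qY.1 qY.2.1 qY.2.2 :=
      compat_cons _ _ _ ⟨qj, hqj0, hqjt, hqj12, hqj23, hqj13⟩
    have hyCons : ConsTriple r s 2 y.1 y.2.1 y.2.2 := by
      rw [hyq]; exact cons_smul lamY qY hCY
    have hzCons : ConsTriple r s 2 z.1 z.2.1 z.2.2 := by
      rw [hzq]; exact cons_smul lamZ qZ hCZ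
    have hy1 : ∀ i j, y.1 i j = lamY * qY.1 i j := fun i j => by rw [hyq]; rfl
    have hy23 : ∀ j k, y.2.1 j k = lamY * qY.2.1 j k := fun j k => by rw [hyq]; rfl
    have hy13 : ∀ i k, y.2.2 i k = lamY * qY.2.2 i k := fun i k => by rw [hyq]; rfl
    have hz1 : ∀ i j, z.1 i j = lamZ * qZ.1 i j := fun i j => by rw [hzq]; rfl
    have hz23 : ∀ j k, z.2.1 j k = lamZ * qZ.2.1 j k := fun j k => by rw [hzq]; rfl
    have hz13 : ∀ i k, z.2.2 i k = lamZ * qZ.2.2 i k := fun i k => by rw [hzq]; rfl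
    constructor
    · -- membership in the consistent cone
      refine mem_consCone hr hs _ ?_ ?_ ?_ (cons_add y z hyCons hzCons)
      · intro i j
        simp only [Prod.fst_add, Pi.add_apply]
        rw [hy1 i j, hz1 i j]
        have := hPY.1 i j; have := hPZ.1 i j
        positivity
      · intro j k
        simp only [Prod.snd_add, Prod.fst_add, Pi.add_apply]
        rw [hy23 j k, hz23 j k]
        have := hPY.2.1 j k; have := hPZ.2.1 j k
        positivity
      · intro i k
        simp only [Prod.snd_add, Pi.add_apply]
        rw [hy13 i k, hz13 i k]
        have := hPY.2.2.1 i k; have := hPZ.2.2.1 i k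
        positivity
    · -- the inequalities
      intro A B
      have hyb : -(∑ i ∈ A, ∑ j ∈ B, y.1 i j) + (∑ i ∈ A, y.2.2 i 0)
          + (∑ j ∈ B, y.2.1 j 0) - (∑ i, y.2.2 i 0) ≤ 0 := by
        have e12 : ∀ i j, y.1 i j = ∑ k, lamY * qj i j k := by
          intro i j; rw [hy1 i j, hqj12 i j, Finset.mul_sum]
        have e23 : ∀ j k, y.2.1 j k = ∑ i, lamY * qj i j k := by
          intro j k; rw [hy23 j k, hqj23 j k, Finset.mul_sum]
        have e13 : ∀ i k, y.2.2 i k = ∑ j, lamY * qj i j k := by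
          intro i k; rw [hy13 i k, hqj13 i k, Finset.mul_sum]
        have hb := expr_joint_le (fun i j k => lamY * qj i j k)
          (fun i j k => mul_nonneg hlY (hqj0 i j k)) A B
        rw [show (∑ i ∈ A, ∑ j ∈ B, y.1 i j) = ∑ i ∈ A, ∑ j ∈ B, ∑ k, lamY * qj i j k from
            Finset.sum_congr rfl fun i _ => Finset.sum_congr rfl fun j _ => e12 i j,
          show (∑ i ∈ A, y.2.2 i 0) = ∑ i ∈ A, ∑ j, lamY * qj i j 0 from
            Finset.sum_congr rfl fun i _ => e13 i 0,
          show (∑ j ∈ B, y.2.1 j 0) = ∑ j ∈ B, ∑ i, lamY * qj i j 0 from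
            Finset.sum_congr rfl fun j _ => e23 j 0,
          show (∑ i, y.2.2 i 0) = ∑ i, ∑ j, lamY * qj i j 0 from
            Finset.sum_congr rfl fun i _ => e13 i 0]
        exact hb
      have hzb : -(∑ i ∈ A, ∑ j ∈ B, z.1 i j) + (∑ i ∈ A, z.2.2 i 0)
          + (∑ j ∈ B, z.2.1 j 0) - (∑ i, z.2.2 i 0) ≤ 1 / 2 := by
        have hch := cons_half qZ.1 qZ.2.1 qZ.2.2 hPZ hCZ A B
        have e1 : ∑ i ∈ A, ∑ j ∈ B, z.1 i j = lamZ * ∑ i ∈ A, ∑ j ∈ B, qZ.1 i j := by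
          rw [Finset.mul_sum]
          exact Finset.sum_congr rfl fun i _ => by
            rw [Finset.mul_sum]; exact Finset.sum_congr rfl fun j _ => hz1 i j
        have e2 : ∑ i ∈ A, z.2.2 i 0 = lamZ * ∑ i ∈ A, qZ.2.2 i 0 := by
          rw [Finset.mul_sum]; exact Finset.sum_congr rfl fun i _ => hz13 i 0
        have e3 : ∑ j ∈ B, z.2.1 j 0 = lamZ * ∑ j ∈ B, qZ.2.1 j 0 := by
          rw [Finset.mul_sum]; exact Finset.sum_congr rfl fun j _ => hz23 j 0
        have e4 : ∑ i, z.2.2 i 0 = lamZ * ∑ i, qZ.2.2 i 0 := by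
          rw [Finset.mul_sum]; exact Finset.sum_congr rfl fun i _ => hz13 i 0
        rw [e1, e2, e3, e4]
        nlinarith [hch, hlZ0, hlZ1]
      simp only [Prod.fst_add, Prod.snd_add, Pi.add_apply, Finset.sum_add_distrib]
      linarith
  · -- hard direction
    rintro ⟨hxc, hineq⟩
    obtain ⟨lam, q, hlam, hPq, hCq, hxq⟩ := hxc
    have hx10 : ∀ i j, 0 ≤ x.1 i j := fun i j => by
      rw [hxq]; show 0 ≤ lam * q.1 i j; exact mul_nonneg hlam (hPq.1 i j)
    have hx230 : ∀ j k, 0 ≤ x.2.1 j k := fun j k => by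
      rw [hxq]; show 0 ≤ lam * q.2.1 j k; exact mul_nonneg hlam (hPq.2.1 j k)
    have hx130 : ∀ i k, 0 ≤ x.2.2 i k := fun i k => by
      rw [hxq]; show 0 ≤ lam * q.2.2 i k; exact mul_nonneg hlam (hPq.2.2.1 i k)
    have hcx : ConsTriple r s 2 x.1 x.2.1 x.2.2 := by rw [hxq]; exact cons_smul lam q hCq
    obtain ⟨hcx1, hcx2, hcx3⟩ := hcx
    obtain ⟨m, A, B, hm0, hmc, hma, hmb, hAd, hBs, hAB1, hAB2⟩ :=
      maxflow x.1 (fun i => x.2.2 i 0) (fun j => x.2.1 j 0) hx10 (fun i => hx130 i 0)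
        (fun j => hx230 j 0)
    have hma' : ∀ i, rsum m i ≤ x.2.2 i 0 := hma
    have hmb' : ∀ j, csum m j ≤ x.2.1 j 0 := hmb
    have hAd' : ∀ i, i ∉ A → rsum m i = x.2.2 i 0 := hAd
    have hBs' : ∀ j ∈ B, csum m j = x.2.1 j 0 := hBs
    set d : Fin r → ℝ := fun i => x.2.2 i 0 - rsum m i with hd
    set e : Fin s → ℝ := fun j => x.2.1 j 0 - csum m j with he
    set res : Fin r → Fin s → ℝ := fun i j => x.1 i j - m i j with hres
    have hd0 : ∀ i, 0 ≤ d i := fun i => sub_nonneg.mpr (hma' i)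
    have he0 : ∀ j, 0 ≤ e j := fun j => sub_nonneg.mpr (hmb' j)
    have hres0 : ∀ i j, 0 ≤ res i j := fun i j => sub_nonneg.mpr (hmc i j)
    set R : Fin r → ℝ := fun i => ∑ j, res i j with hRdef
    set Cc : Fin s → ℝ := fun j => ∑ i, res i j with hCdef
    have hRs : ∀ i, ∑ j, res i j = R i := fun i => rfl
    have hCs : ∀ j, ∑ i, res i j = Cc j := fun j => rfl
    have hR0 : ∀ i, 0 ≤ R i := fun i => Finset.sum_nonneg fun j _ => hres0 i j
    have hC0 : ∀ j, 0 ≤ Cc j := fun j => Finset.sum_nonneg fun i _ => hres0 i j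
    have hR : ∀ i, R i = d i + x.2.2 i 1 := by
      intro i
      have h1 : R i = (∑ j, x.1 i j) - rsum m i := by
        simp only [hRdef, hres, Finset.sum_sub_distrib]; rfl
      rw [h1, hcx1 i, Fin.sum_univ_two, hd]; ring
    have hC : ∀ j, Cc j = e j + x.2.1 j 1 := by
      intro j
      have h1 : Cc j = (∑ i, x.1 i j) - csum m j := by
        simp only [hCdef, hres, Finset.sum_sub_distrib]; rfl
      rw [h1, hcx2 j, Fin.sum_univ_two, he]; ring
    have hdR : ∀ i, d i ≤ R i := fun i => by rw [hR i]; have := hx130 i 1; linarith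
    have heC : ∀ j, e j ≤ Cc j := fun j => by rw [hC j]; have := hx230 j 1; linarith
    have hsum_rc : ∑ i, rsum m i = ∑ j, csum m j := by
      unfold rsum csum; exact Finset.sum_comm
    have hDe : ∑ i, d i = ∑ j, e j := by
      have h1 : ∑ i, d i = (∑ i, x.2.2 i 0) - ∑ i, rsum m i := by
        simp only [hd, Finset.sum_sub_distrib]
      have h2 : ∑ j, e j = (∑ j, x.2.1 j 0) - ∑ j, csum m j := by
        simp only [he, Finset.sum_sub_distrib]
      rw [h1, h2, hcx3 0, hsum_rc]
    have hD0 : 0 ≤ ∑ i, d i := Finset.sum_nonneg fun i _ => hd0 i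
    have hDhalf : ∑ i, d i ≤ 1 / 2 := by
      have hkey := hineq A Bᶜ
      have hBc : ∑ j ∈ Bᶜ, x.2.1 j 0 = (∑ i, x.2.2 i 0) - ∑ j ∈ B, x.2.1 j 0 := by
        have h := Finset.sum_add_sum_compl B (fun j => x.2.1 j 0)
        rw [hcx3 0] at h
        linarith
      have hDA : ∑ i, d i = ∑ i ∈ A, d i := by
        rw [← Finset.sum_add_sum_compl A d]
        have h : ∑ i ∈ Aᶜ, d i = 0 := Finset.sum_eq_zero fun i hi => by
          simp [hd, hAd' i (Finset.mem_compl.mp hi)]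
        linarith
      have hsplitrow : ∑ i ∈ A, rsum m i
          = ∑ i ∈ A, ∑ j ∈ B, m i j + ∑ i ∈ A, ∑ j ∈ Bᶜ, m i j := by
        rw [← Finset.sum_add_distrib]
        exact Finset.sum_congr rfl fun i _ => (Finset.sum_add_sum_compl B _).symm
      have hABc : ∑ i ∈ A, ∑ j ∈ Bᶜ, m i j = ∑ i ∈ A, ∑ j ∈ Bᶜ, x.1 i j :=
        Finset.sum_congr rfl fun i hi => Finset.sum_congr rfl fun j hj =>
          hAB1 i hi j (Finset.mem_compl.mp hj)
      have hABm : ∑ i ∈ A, ∑ j ∈ B, m i j = ∑ j ∈ B, x.2.1 j 0 := by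
        rw [Finset.sum_comm]
        refine Finset.sum_congr rfl fun j hj => ?_
        have hz : ∑ i ∈ Aᶜ, m i j = 0 :=
          Finset.sum_eq_zero fun i hi => hAB2 i (Finset.mem_compl.mp hi) j hj
        have htot := Finset.sum_add_sum_compl A (fun i => m i j)
        have hcsj := hBs' j hj
        unfold csum at hcsj
        linarith
      have hdA : ∑ i ∈ A, d i = ∑ i ∈ A, x.2.2 i 0 - ∑ i ∈ A, rsum m i := by
        simp only [hd, Finset.sum_sub_distrib]
      linarith
    -- proportional flows
    set F1 : Fin r → Fin s → ℝ :=
      fun i j => if R i = 0 then 0 else d i / R i * res i j with hF1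
    set F2 : Fin r → Fin s → ℝ :=
      fun i j => if Cc j = 0 then 0 else e j / Cc j * res i j with hF2
    have hF10 : ∀ i j, 0 ≤ F1 i j := by
      intro i j; simp only [hF1]
      split
      · exact le_refl 0
      · exact mul_nonneg (div_nonneg (hd0 i) (hR0 i)) (hres0 i j)
    have hF20 : ∀ i j, 0 ≤ F2 i j := by
      intro i j; simp only [hF2]
      split
      · exact le_refl 0
      · exact mul_nonneg (div_nonneg (he0 j) (hC0 j)) (hres0 i j)
    have hF1le : ∀ i j, F1 i j ≤ res i j := by
      intro i j; simp only [hF1]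
      split
      · exact hres0 i j
      · rename_i h
        have hRpos : 0 < R i := lt_of_le_of_ne (hR0 i) (Ne.symm h)
        have h1 : d i / R i ≤ 1 := (div_le_one hRpos).mpr (hdR i)
        exact mul_le_of_le_one_left (hres0 i j) h1
    have hF2le : ∀ i j, F2 i j ≤ res i j := by
      intro i j; simp only [hF2]
      split
      · exact hres0 i j
      · rename_i h
        have hCpos : 0 < Cc j := lt_of_le_of_ne (hC0 j) (Ne.symm h)
        have h1 : e j / Cc j ≤ 1 := (div_le_one hCpos).mpr (heC j)
        exact mul_le_of_le_one_left (hres0 i j) h1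
    have hF1row : ∀ i, ∑ j, F1 i j = d i := by
      intro i
      by_cases h : R i = 0
      · have hd' : d i = 0 := le_antisymm (h ▸ hdR i) (hd0 i)
        have hz : ∀ j, F1 i j = 0 := fun j => by simp [hF1, h]
        rw [Finset.sum_congr rfl fun j _ => hz j, Finset.sum_const_zero, hd']
      · have e1 : ∀ j, F1 i j = d i / R i * res i j := fun j => by simp [hF1, h]
        rw [Finset.sum_congr rfl fun j _ => e1 j, ← Finset.mul_sum, hRs i,
          div_mul_cancel₀ _ h]
    have hF2col : ∀ j, ∑ i, F2 i j = e j := by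
      intro j
      by_cases h : Cc j = 0
      · have he' : e j = 0 := le_antisymm (h ▸ heC j) (he0 j)
        have hz : ∀ i, F2 i j = 0 := fun i => by simp [hF2, h]
        rw [Finset.sum_congr rfl fun i _ => hz i, Finset.sum_const_zero, he']
      · have e1 : ∀ i, F2 i j = e j / Cc j * res i j := fun i => by simp [hF2, h]
        rw [Finset.sum_congr rfl fun i _ => e1 i, ← Finset.mul_sum, hCs j,
          div_mul_cancel₀ _ h]
    have hF1supp : ∀ i j, F1 i j ≠ 0 → d i ≠ 0 ∧ res i j ≠ 0 := by
      intro i j hne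
      by_cases h : R i = 0
      · exact absurd (by simp [hF1, h]) hne
      · simp only [hF1, if_neg h] at hne
        refine ⟨fun hd' => hne ?_, fun hr' => hne ?_⟩
        · rw [hd']; simp
        · rw [hr']; simp
    have hF2supp : ∀ i j, F2 i j ≠ 0 → e j ≠ 0 ∧ res i j ≠ 0 := by
      intro i j hne
      by_cases h : Cc j = 0
      · exact absurd (by simp [hF2, h]) hne
      · simp only [hF2, if_neg h] at hne
        refine ⟨fun he' => hne ?_, fun hr' => hne ?_⟩
        · rw [he']; simp
        · rw [hr']; simp
    have hdisj : ∀ i j, F1 i j = 0 ∨ F2 i j = 0 := by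
      intro i j
      by_cases h1 : F1 i j = 0
      · exact Or.inl h1
      right
      by_contra h2
      obtain ⟨hdne, hresne⟩ := hF1supp i j h1
      obtain ⟨hene, -⟩ := hF2supp i j h2
      have hiA : i ∈ A := by
        by_contra hiA
        exact hdne (by simp [hd, hAd' i hiA])
      have hjB : j ∉ B := by
        intro hjB
        exact hene (by simp [he, hBs' j hjB])
      exact hresne (by simp [hres, hAB1 i hiA j hjB])
    have hFres : ∀ i j, F1 i j + F2 i j ≤ res i j := by
      intro i j
      rcases hdisj i j with h | h
      · rw [h, zero_add]; exact hF2le i j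
      · rw [h, add_zero]; exact hF1le i j
    -- the consistent-ball part z
    set z : Trip r s := (fun i j => F1 i j + F2 i j,
      fun j k => if k = 0 then e j else ∑ i, F1 i j,
      fun i k => if k = 0 then d i else ∑ j, F2 i j) with hzdef
    have hF2tot : ∑ i, ∑ j, F2 i j = ∑ j, e j := by
      rw [Finset.sum_comm]
      exact Finset.sum_congr rfl fun j _ => hF2col j
    have hF1tot : ∑ j, ∑ i, F1 i j = ∑ i, d i := by
      rw [Finset.sum_comm]
      exact Finset.sum_congr rfl fun i _ => hF1row i
    have hzmass : ∑ i, ∑ j, z.1 i j = ∑ i, d i + ∑ j, e j := by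
      have h1 : ∀ i, ∑ j, (F1 i j + F2 i j) = d i + ∑ j, F2 i j := fun i => by
        rw [Finset.sum_add_distrib, hF1row i]
      calc ∑ i, ∑ j, z.1 i j = ∑ i, (d i + ∑ j, F2 i j) :=
            Finset.sum_congr rfl fun i _ => h1 i
        _ = ∑ i, d i + ∑ i, ∑ j, F2 i j := Finset.sum_add_distrib
        _ = ∑ i, d i + ∑ j, e j := by rw [hF2tot]
    have hzcons : ConsTriple r s 2 z.1 z.2.1 z.2.2 := by
      refine ⟨fun i => ?_, fun j => ?_, fun k => ?_⟩
      · show ∑ j, (F1 i j + F2 i j) = ∑ k : Fin 2, (if k = 0 then d i else ∑ j, F2 i j)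
        rw [Fin.sum_univ_two, if_pos rfl, if_neg (by decide : ¬(1 : Fin 2) = 0),
          Finset.sum_add_distrib, hF1row i]
      · show ∑ i, (F1 i j + F2 i j) = ∑ k : Fin 2, (if k = 0 then e j else ∑ i, F1 i j)
        rw [Fin.sum_univ_two, if_pos rfl, if_neg (by decide : ¬(1 : Fin 2) = 0),
          Finset.sum_add_distrib, hF2col j]
        ring
      · show ∑ j, (if k = 0 then e j else ∑ i, F1 i j)
            = ∑ i, (if k = 0 then d i else ∑ j, F2 i j)
        by_cases hk : k = 0
        · simp only [if_pos hk]; exact hDe.symm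
        · simp only [if_neg hk]
          rw [hF1tot, hF2tot]
          exact hDe
    have hzmem : z ∈ consBall r s := by
      refine mem_consBall hr hs z ?_ ?_ ?_ hzcons ?_
      · intro i j; show 0 ≤ F1 i j + F2 i j
        exact add_nonneg (hF10 i j) (hF20 i j)
      · intro j k; show 0 ≤ if k = 0 then e j else ∑ i, F1 i j
        split
        · exact he0 j
        · exact Finset.sum_nonneg fun i _ => hF10 i j
      · intro i k; show 0 ≤ if k = 0 then d i else ∑ j, F2 i j
        split
        · exact hd0 i
        · exact Finset.sum_nonneg fun j _ => hF20 i j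
      · rw [hzmass, ← hDe]; linarith
    set Q : Fin r → Fin s → Fin 2 → ℝ :=
      fun i j k => if k = 0 then m i j else res i j - (F1 i j + F2 i j) with hQdef
    have hQ0 : ∀ i j k, 0 ≤ Q i j k := by
      intro i j k
      show 0 ≤ if k = 0 then m i j else res i j - (F1 i j + F2 i j)
      split
      · exact hm0 i j
      · exact sub_nonneg.mpr (hFres i j)
    have hQe0 : ∀ i j, Q i j 0 = m i j := fun i j => rfl
    have hQe1 : ∀ i j, Q i j 1 = res i j - (F1 i j + F2 i j) := fun i j => by
      show (if (1 : Fin 2) = 0 then m i j else res i j - (F1 i j + F2 i j)) = _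
      rw [if_neg (by decide : ¬(1 : Fin 2) = 0)]
    refine ⟨_, mem_compatCone hr hs Q hQ0, z, hzmem, ?_⟩
    refine Prod.ext ?_ (Prod.ext ?_ ?_)
    · funext i j
      show (∑ k, Q i j k) + (F1 i j + F2 i j) = x.1 i j
      rw [Fin.sum_univ_two, hQe0, hQe1]
      have : res i j = x.1 i j - m i j := rfl
      rw [this]; ring
    · funext j k
      show (∑ i, Q i j k) + (if k = 0 then e j else ∑ i, F1 i j) = x.2.1 j k
      by_cases hk : k = 0
      · subst hk
        rw [if_pos rfl, Finset.sum_congr rfl fun i _ => hQe0 i j]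
        have h1 : e j = x.2.1 j 0 - csum m j := rfl
        have h2 : csum m j = ∑ i, m i j := rfl
        rw [h1, h2]; ring
      · have hk1 : k = 1 := by omega
        subst hk1
        rw [if_neg (by decide : ¬(1 : Fin 2) = 0),
          Finset.sum_congr rfl fun i _ => hQe1 i j, Finset.sum_sub_distrib,
          Finset.sum_add_distrib, hF2col j, hCs j, hC j]
        ring
    · funext i k
      show (∑ j, Q i j k) + (if k = 0 then d i else ∑ j, F2 i j) = x.2.2 i k
      by_cases hk : k = 0
      · subst hk
        rw [if_pos rfl, Finset.sum_congr rfl fun j _ => hQe0 i j]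
        have h1 : d i = x.2.2 i 0 - rsum m i := rfl
        have h2 : rsum m i = ∑ j, m i j := rfl
        rw [h1, h2]; ring
      · have hk1 : k = 1 := by omega
        subst hk1
        rw [if_neg (by decide : ¬(1 : Fin 2) = 0),
          Finset.sum_congr rfl fun j _ => hQe1 i j, Finset.sum_sub_distrib,
          Finset.sum_add_distrib, hF1row i, hRs i, hR i]
        ring
end

section
/- Let d = 3, 𝕊 = {{1,2},{2,3},{1,3}} and X = [r] × [2] × [2] for some r ∈ ℕ. Then for every consistent family P_𝕊 ∈ 𝒫_𝕊^cons, R(P_𝕊) = 2 max_{j ∈ [2]} { p_{•j1} − ∑_{i=1}^r min(p_{ij•}, p_{i•1}) }_+, where p_{ij•} = P_{{1,2}}({(i,j)}), p_{i•1} = P_{{1,3}}({(i,1)}), p_{•j1} = P_{{2,3}}({(j,1)}), and y_+ = max(y,0). -/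
/-!
Substituting `f = 3e - 1` turns `R(P)` into `1 - min ⟪e, P⟫` over fractional covers `e ≥ 0`
(`e₁₂ + e₂₃ + e₁₃ ≥ 1` on every triple), and weak LP duality bounds `⟪e, P⟫` below by the mass of
any sub-coupling `q` (a measure on `X` whose margins are at most those of `P`).

Put `Δⱼ = p_{•j1} - ∑ᵢ min (p_{ij•}, p_{i•1})`. The 0/1 cover built from the Boolean labels
`j = j₀`, `k ≠ 1`, `p_{ij₀•} ≤ p_{i•1}` has mass `1 - 2Δ_{j₀}`, so `R ≥ 2Δ_{j₀}`. Conversely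
`Δ₁ + Δ₂ ≤ 0`, and if `Δ_{j₁} ≤ 0` the cell `(j₀, 1)` can be filled with masses between
`(p_{i•1} - p_{ij₁•})₊` and `min (p_{ij₀•}, p_{i•1})` summing to `p_{•j₀1} - (Δ_{j₀})₊`; the margins
then complete it to a sub-coupling of mass `1 - 2(Δ_{j₀})₊`.
-/

theorem exists_sum_eq_of_sum_le_of_le_sum {ι : Type*} [Fintype ι] {lo hi : ι → ℝ} {c : ℝ}
    (hle : lo ≤ hi) (hlo : ∑ i, lo i ≤ c) (hhi : c ≤ ∑ i, hi i) :
    ∃ x : ι → ℝ, lo ≤ x ∧ x ≤ hi ∧ ∑ i, x i = c := by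
  rcases (hlo.trans hhi).eq_or_lt with heq | hlt
  · exact ⟨lo, le_rfl, hle, by linarith⟩
  set κ := (c - ∑ i, lo i) / (∑ i, hi i - ∑ i, lo i)
  have hκ0 : 0 ≤ κ := div_nonneg (by linarith) (by linarith)
  have hκ1 : κ ≤ 1 := (div_le_one (by linarith)).2 (by linarith)
  refine ⟨fun i => lo i + κ * (hi i - lo i), fun i => ?_, fun i => ?_, ?_⟩
  · have := mul_nonneg hκ0 (sub_nonneg.2 (hle i)); dsimp; linarith
  · have := mul_le_of_le_one_left (sub_nonneg.2 (hle i)) hκ1; dsimp; linarith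
  · rw [Finset.sum_add_distrib, ← Finset.mul_sum, Finset.sum_sub_distrib,
      div_mul_cancel₀ _ (by linarith)]
    ring

theorem sum_sum_mul_sub_le {α β : Type*} [Fintype α] [Fintype β] {f P Q : α → β → ℝ}
    (hf : ∀ a b, -1 ≤ f a b) (hQ : ∀ a b, Q a b ≤ P a b) :
    ∑ a, ∑ b, f a b * Q a b - (∑ a, ∑ b, P a b - ∑ a, ∑ b, Q a b) ≤
      ∑ a, ∑ b, f a b * P a b := by
  simp only [← Finset.sum_sub_distrib]
  gcongr with a _ b _
  nlinarith [mul_nonneg (neg_le_iff_add_nonneg'.1 (hf a b)) (sub_nonneg.2 (hQ a b))]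

theorem sum_sum_sum_comm_rotate {α β γ : Type*} [Fintype α] [Fintype β] [Fintype γ]
    (F : α → β → γ → ℝ) : ∑ b, ∑ c, ∑ a, F a b c = ∑ a, ∑ b, ∑ c, F a b c :=
  (Finset.sum_congr rfl fun _ _ => Finset.sum_comm).trans Finset.sum_comm

theorem sum_ite_eq_sub_add {ι : Type*} [Fintype ι] [DecidableEq ι] (x y : ι → ℝ) (i₀ : ι) :
    ∑ i, (if i = i₀ then y i else x i) = ∑ i, x i - x i₀ + y i₀ := by
  rw [Fintype.sum_eq_add_sum_compl i₀, Fintype.sum_eq_add_sum_compl i₀ x, if_pos rfl,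
    Finset.sum_congr rfl fun i hi => if_neg (by simpa using hi)]
  ring

theorem sum_indicator_iff_mul {ι : Type*} [Fintype ι] [DecidableEq ι] (x : ι → ℝ) (i₀ : ι)
    (P : Prop) [Decidable P] :
    ∑ i, (if (i = i₀ ↔ P) then 1 else 0) * x i = if P then x i₀ else ∑ i, x i - x i₀ := by
  by_cases hP : P
  · simp [hP]
  · simpa [hP] using sum_ite_eq_sub_add x 0 i₀

theorem Fin.eq_or_eq_of_ne {j₀ j₁ : Fin 2} (h : j₀ ≠ j₁) (j : Fin 2) : j = j₀ ∨ j = j₁ := by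
  omega

theorem Fin.sum_univ_two_of_ne {M : Type*} [AddCommMonoid M] {j₀ j₁ : Fin 2} (h : j₀ ≠ j₁)
    (f : Fin 2 → M) : ∑ j, f j = f j₀ + f j₁ := by
  rcases Fin.eq_or_eq_of_ne h 0 with rfl | rfl
  · rw [Fin.sum_univ_two, Fin.eq_one_of_ne_zero j₁ h.symm]
  · rw [Fin.sum_univ_two, Fin.eq_one_of_ne_zero j₀ h, add_comm]

theorem le_min_add_min {a a' b : ℝ} (ha : 0 ≤ a) (ha' : 0 ≤ a') (hb : 0 ≤ b)
    (hb' : b ≤ a + a') : b ≤ min a b + min a' b := by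
  rcases le_total a b with h | h <;> rcases le_total a' b with h' | h' <;>
    simp only [min_eq_left, min_eq_right, h, h'] <;> linarith

section General

variable {r s u : ℕ} {p12 : Fin r → Fin s → ℝ} {p23 : Fin s → Fin u → ℝ}
  {p13 : Fin r → Fin u → ℝ}

def IsSubcoupling (p12 : Fin r → Fin s → ℝ) (p23 : Fin s → Fin u → ℝ)
    (p13 : Fin r → Fin u → ℝ) (q : Fin r → Fin s → Fin u → ℝ) : Prop :=
  (∀ i j k, 0 ≤ q i j k) ∧ (∀ i j, ∑ k, q i j k ≤ p12 i j) ∧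
    (∀ j k, ∑ i, q i j k ≤ p23 j k) ∧ (∀ i k, ∑ j, q i j k ≤ p13 i k)

theorem objective_le_one_sub_sum_of_subcoupling (hp : ProbTriple r s u p12 p23 p13)
    {q : Fin r → Fin s → Fin u → ℝ} (hq : IsSubcoupling p12 p23 p13 q)
    {f12 : Fin r → Fin s → ℝ} {f23 : Fin s → Fin u → ℝ} {f13 : Fin r → Fin u → ℝ}
    (hf12 : ∀ i j, -1 ≤ f12 i j) (hf23 : ∀ j k, -1 ≤ f23 j k) (hf13 : ∀ i k, -1 ≤ f13 i k)
    (hf : ∀ i j k, 0 ≤ f12 i j + f23 j k + f13 i k) :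
    -(1 / 3) * ((∑ i, ∑ j, f12 i j * p12 i j) + (∑ j, ∑ k, f23 j k * p23 j k) +
      (∑ i, ∑ k, f13 i k * p13 i k)) ≤ 1 - ∑ i, ∑ j, ∑ k, q i j k := by
  obtain ⟨-, -, -, h12, h23, h13⟩ := hp
  obtain ⟨hq, hq12, hq23, hq13⟩ := hq
  have e12 := sum_sum_mul_sub_le hf12 hq12
  have e23 := sum_sum_mul_sub_le hf23 hq23
  have e13 := sum_sum_mul_sub_le hf13 hq13
  simp only [Finset.mul_sum] at e12 e23 e13
  have r23 := sum_sum_sum_comm_rotate fun i j k => f23 j k * q i j k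
  have t23 := sum_sum_sum_comm_rotate q
  have r13 : ∑ i, ∑ k, ∑ j, f13 i k * q i j k = ∑ i, ∑ j, ∑ k, f13 i k * q i j k :=
    Finset.sum_congr rfl fun _ _ => Finset.sum_comm
  have t13 : ∑ i, ∑ k, ∑ j, q i j k = ∑ i, ∑ j, ∑ k, q i j k :=
    Finset.sum_congr rfl fun _ _ => Finset.sum_comm
  have hf_q : 0 ≤ ∑ i, ∑ j, ∑ k, (f12 i j + f23 j k + f13 i k) * q i j k :=
    Finset.sum_nonneg fun i _ => Finset.sum_nonneg fun j _ => Finset.sum_nonneg fun k _ =>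
      mul_nonneg (hf i j k) (hq i j k)
  simp only [add_mul, Finset.sum_add_distrib] at hf_q
  linarith

theorem RTriple_le_of_subcoupling (hp : ProbTriple r s u p12 p23 p13)
    {q : Fin r → Fin s → Fin u → ℝ} (hq : IsSubcoupling p12 p23 p13 q) :
    RTriple r s u p12 p23 p13 ≤ 1 - ∑ i, ∑ j, ∑ k, q i j k := by
  refine csSup_le ⟨0, 0, 0, 0, fun _ _ => by norm_num, fun _ _ => by norm_num,
    fun _ _ => by norm_num, fun _ _ _ => by norm_num, by simp⟩ ?_
  rintro t ⟨f12, f23, f13, hf12, hf23, hf13, hf, rfl⟩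
  exact objective_le_one_sub_sum_of_subcoupling hp hq hf12 hf23 hf13 hf

theorem one_sub_cover_le_RTriple (hp : ProbTriple r s u p12 p23 p13)
    {e12 : Fin r → Fin s → ℝ} {e23 : Fin s → Fin u → ℝ} {e13 : Fin r → Fin u → ℝ}
    (he12 : ∀ i j, 0 ≤ e12 i j) (he23 : ∀ j k, 0 ≤ e23 j k) (he13 : ∀ i k, 0 ≤ e13 i k)
    (he : ∀ i j k, 1 ≤ e12 i j + e23 j k + e13 i k) :
    1 - ((∑ i, ∑ j, e12 i j * p12 i j) + (∑ j, ∑ k, e23 j k * p23 j k) +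
      (∑ i, ∑ k, e13 i k * p13 i k)) ≤ RTriple r s u p12 p23 p13 := by
  refine le_csSup ⟨1, ?_⟩ ⟨fun i j => 3 * e12 i j - 1, fun j k => 3 * e23 j k - 1,
    fun i k => 3 * e13 i k - 1, fun i j => ?_, fun j k => ?_, fun i k => ?_, fun i j k => ?_, ?_⟩
  · rintro t ⟨f12, f23, f13, hf12, hf23, hf13, hf, rfl⟩
    simpa using objective_le_one_sub_sum_of_subcoupling hp (q := 0)
      ⟨fun _ _ _ => le_rfl, by simpa using hp.1, by simpa using hp.2.1, by simpa using hp.2.2.1⟩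
      hf12 hf23 hf13 hf
  · linarith [he12 i j]
  · linarith [he23 j k]
  · linarith [he13 i k]
  · linarith [he i j k]
  · obtain ⟨-, -, -, h12, h23, h13⟩ := hp
    simp only [sub_mul, Finset.sum_sub_distrib, mul_assoc, ← Finset.mul_sum, one_mul]
    linarith

theorem RTriple_nonneg (hp : ProbTriple r s u p12 p23 p13) : 0 ≤ RTriple r s u p12 p23 p13 := by
  simpa [hp.2.2.2.1] using one_sub_cover_le_RTriple hp (e12 := 1) (e23 := 0) (e13 := 0)
    (fun _ _ => zero_le_one) (fun _ _ => le_rfl) (fun _ _ => le_rfl) (fun _ _ _ => by simp)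

theorem two_mul_sub_sum_min_le_RTriple (hp : ProbTriple r s u p12 p23 p13)
    (hc : ConsTriple r s u p12 p23 p13) (j₀ : Fin s) (k₀ : Fin u) :
    2 * (p23 j₀ k₀ - ∑ i, min (p12 i j₀) (p13 i k₀)) ≤ RTriple r s u p12 p23 p13 := by
  obtain ⟨hrow, hcol12, hcol13⟩ := hc
  set S : Fin r → Prop := fun i => p12 i j₀ ≤ p13 i k₀
  have hcover := one_sub_cover_le_RTriple hp
    (e12 := fun i j => if (j = j₀ ↔ S i) then 1 else 0)
    (e23 := fun j k => if (k = k₀ ↔ ¬ j = j₀) then 1 else 0)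
    (e13 := fun i k => if (k = k₀ ↔ ¬ S i) then 1 else 0)
    (fun _ _ => by positivity) (fun _ _ => by positivity) (fun _ _ => by positivity)
    -- two of the three labels `j = j₀`, `k ≠ k₀`, `S i` always agree
    (fun i j k => by split_ifs <;> first | tauto | norm_num)
  simp only [sum_indicator_iff_mul, ite_not, sum_ite_eq_sub_add] at hcover
  have hrowwise : ∀ i, ((if S i then p12 i j₀ else ∑ j, p12 i j - p12 i j₀) +
      if S i then ∑ k, p13 i k - p13 i k₀ else p13 i k₀) =
      ∑ j, p12 i j + 2 * min (p12 i j₀) (p13 i k₀) - p12 i j₀ - p13 i k₀ := by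
    intro i
    rw [hrow i]
    by_cases h : S i
    · simp only [h, if_true, min_eq_left h]; ring
    · simp only [h, if_false, min_eq_right (le_of_not_ge h)]; ring
  have hsum := Finset.sum_congr rfl fun i (_ : i ∈ Finset.univ) => hrowwise i
  simp only [Finset.sum_add_distrib, Finset.sum_sub_distrib, ← Finset.mul_sum] at hsum
  linarith [hp.2.2.2.1, hcol12 j₀, hcol13 k₀]

end General

section TwoByTwo

variable {r : ℕ} {p12 : Fin r → Fin 2 → ℝ} {p23 : Fin 2 → Fin 2 → ℝ}
  {p13 : Fin r → Fin 2 → ℝ}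

theorem sub_sum_min_add_sub_sum_min_nonpos (hp : ProbTriple r 2 2 p12 p23 p13)
    (hc : ConsTriple r 2 2 p12 p23 p13) :
    (p23 0 0 - ∑ i, min (p12 i 0) (p13 i 0)) + (p23 1 0 - ∑ i, min (p12 i 1) (p13 i 0)) ≤ 0 := by
  obtain ⟨h12, -, h13, -⟩ := hp
  obtain ⟨hrow, -, hcol13⟩ := hc
  have hcol := hcol13 0
  rw [Fin.sum_univ_two] at hcol
  have hmin : ∑ i, p13 i 0 ≤ ∑ i, (min (p12 i 0) (p13 i 0) + min (p12 i 1) (p13 i 0)) := by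
    gcongr with i
    refine le_min_add_min (h12 i 0) (h12 i 1) (h13 i 0) ?_
    have := hrow i
    simp only [Fin.sum_univ_two] at this
    linarith [h13 i 1]
  rw [Finset.sum_add_distrib] at hmin
  linarith

theorem exists_subcoupling_of_cell (hp : ProbTriple r 2 2 p12 p23 p13)
    (hc : ConsTriple r 2 2 p12 p23 p13) {j₀ j₁ : Fin 2} (hne : j₀ ≠ j₁) {α : Fin r → ℝ} {δ : ℝ}
    (hα_nonneg : ∀ i, 0 ≤ α i) (hα_lo : ∀ i, p13 i 0 - p12 i j₁ ≤ α i)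
    (hα_hi : ∀ i, α i ≤ min (p12 i j₀) (p13 i 0)) (hδ : 0 ≤ δ) (hα : ∑ i, α i = p23 j₀ 0 - δ) :
    ∃ q, IsSubcoupling p12 p23 p13 q ∧ ∑ i, ∑ j, ∑ k, q i j k = 1 - 2 * δ := by
  obtain ⟨-, h23, -, -, hone, -⟩ := hp
  obtain ⟨hrow, hcol12, hcol13⟩ := hc
  have hrow' : ∀ i, p12 i j₀ + p12 i j₁ = p13 i 0 + p13 i 1 := fun i => by
    rw [← Fin.sum_univ_two_of_ne hne, ← Fin.sum_univ_two]; exact hrow i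
  have hcol12' : ∀ j, ∑ i, p12 i j = p23 j 0 + p23 j 1 := fun j =>
    (hcol12 j).trans (Fin.sum_univ_two _)
  have hcol13' : ∑ i, p13 i 0 = p23 j₀ 0 + p23 j₁ 0 :=
    (hcol13 0).symm.trans (Fin.sum_univ_two_of_ne hne _)
  rw [Fin.sum_univ_two_of_ne hne] at hone
  simp only [Fin.sum_univ_two] at hone
  obtain ⟨β, hβ_nonneg, hβ_le, hβ⟩ : ∃ β : Fin r → ℝ,
      (∀ i, 0 ≤ β i) ∧ (∀ i, β i ≤ p12 i j₀ - α i) ∧ ∑ i, β i = p23 j₀ 1 :=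
    exists_sum_eq_of_sum_le_of_le_sum
      (fun i => sub_nonneg.2 ((hα_hi i).trans (min_le_left _ _))) (by simpa using h23 j₀ 1)
      (by rw [Finset.sum_sub_distrib, hcol12', hα]; linarith)
  obtain ⟨γ, hγ_nonneg, hγ_le, hγ⟩ : ∃ γ : Fin r → ℝ,
      (∀ i, 0 ≤ γ i) ∧ (∀ i, γ i ≤ p13 i 0 - α i) ∧ ∑ i, γ i = p23 j₁ 0 :=
    exists_sum_eq_of_sum_le_of_le_sum
      (fun i => sub_nonneg.2 ((hα_hi i).trans (min_le_right _ _))) (by simpa using h23 j₁ 0)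
      (by rw [Finset.sum_sub_distrib, hcol13', hα]; linarith)
  refine ⟨fun i j k => if j = j₀ then (if k = 0 then α i else β i)
    else (if k = 0 then γ i else p12 i j - p13 i 0 + α i), ⟨?_, ?_, ?_, ?_⟩, ?_⟩
  · intro i j k
    rcases Fin.eq_or_eq_of_ne hne j with rfl | rfl <;> fin_cases k <;> simp [hne.symm] <;>
      linarith [hβ_nonneg i, hγ_nonneg i, hα_nonneg i, hα_lo i]
  · intro i j
    rcases Fin.eq_or_eq_of_ne hne j with rfl | rfl <;> simp [Fin.sum_univ_two, hne.symm] <;>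
      linarith [hβ_le i, hγ_le i]
  · intro j k
    rcases Fin.eq_or_eq_of_ne hne j with rfl | rfl <;> fin_cases k <;>
      simp [hne.symm, Finset.sum_add_distrib, Finset.sum_sub_distrib, hα, hβ, hγ, hcol12',
        hcol13'] <;> linarith
  · intro i k
    rw [Fin.sum_univ_two_of_ne hne]
    fin_cases k <;> simp [hne.symm] <;> linarith [hβ_le i, hγ_le i, hrow' i]
  · rw [Finset.sum_congr rfl fun i _ => Fin.sum_univ_two_of_ne hne _]
    simp [Fin.sum_univ_two, hne.symm, Finset.sum_add_distrib, Finset.sum_sub_distrib, hα, hβ,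
      hγ, hcol12', hcol13']
    linarith

theorem exists_subcoupling_sum_eq (hp : ProbTriple r 2 2 p12 p23 p13)
    (hc : ConsTriple r 2 2 p12 p23 p13) {j₀ j₁ : Fin 2} (hne : j₀ ≠ j₁)
    (h₁ : p23 j₁ 0 - ∑ i, min (p12 i j₁) (p13 i 0) ≤ 0) :
    ∃ q, IsSubcoupling p12 p23 p13 q ∧
      ∑ i, ∑ j, ∑ k, q i j k = 1 - 2 * max (p23 j₀ 0 - ∑ i, min (p12 i j₀) (p13 i 0)) 0 := by
  set hi : Fin r → ℝ := fun i => min (p12 i j₀) (p13 i 0)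
  set lo : Fin r → ℝ := fun i => p13 i 0 - min (p12 i j₁) (p13 i 0)
  have hlo_hi : lo ≤ hi := fun i => by
    have hrow := hc.1 i
    rw [Fin.sum_univ_two_of_ne hne, Fin.sum_univ_two] at hrow
    have := le_min_add_min (hp.1 i j₀) (hp.1 i j₁) (hp.2.2.1 i 0)
      (by linarith [hp.2.2.1 i 1])
    simp only [lo, hi]; linarith
  have hsum_lo : ∑ i, lo i = p23 j₀ 0 + (p23 j₁ 0 - ∑ i, min (p12 i j₁) (p13 i 0)) := by
    simp only [lo, Finset.sum_sub_distrib, ← hc.2.2 0, Fin.sum_univ_two_of_ne hne]; ring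
  obtain ⟨α, hlo_α, hα_hi, hα⟩ := exists_sum_eq_of_sum_le_of_le_sum hlo_hi
    (c := min (p23 j₀ 0) (∑ i, hi i))
    (le_min (by linarith) (Finset.sum_le_sum fun i _ => hlo_hi i)) (min_le_right _ _)
  rw [← sub_sub_cancel (p23 j₀ 0) (min _ _), ← max_sub_sub_left, sub_self, max_comm] at hα
  refine exists_subcoupling_of_cell hp hc hne (fun i => ?_) (fun i => ?_) hα_hi
    (le_max_right _ _) hα
  · exact (sub_nonneg.2 (min_le_right _ _)).trans (hlo_α i)
  · linarith [hlo_α i, min_le_left (p12 i j₁) (p13 i 0)]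

end TwoByTwo

-- The value `1 ∈ [2]` of the paper is `(0 : Fin 2)`.
theorem statement_9_general (r : ℕ)
    (p12 : Fin r → Fin 2 → ℝ) (p23 : Fin 2 → Fin 2 → ℝ) (p13 : Fin r → Fin 2 → ℝ)
    (hprob : ProbTriple r 2 2 p12 p23 p13) (hcons : ConsTriple r 2 2 p12 p23 p13) :
    RTriple r 2 2 p12 p23 p13 =
      2 * sSup {t | ∃ j : Fin 2,
        t = max (p23 j 0 - ∑ i, min (p12 i j) (p13 i 0)) 0} := by
  set Δ : Fin 2 → ℝ := fun j => p23 j 0 - ∑ i, min (p12 i j) (p13 i 0)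
  have hset : {t | ∃ j : Fin 2, t = max (Δ j) 0} = Set.range fun j => max (Δ j) 0 := by
    ext; simp [eq_comm]
  rw [hset, ← iSup]
  apply le_antisymm
  · obtain ⟨j₀, j₁, hne, h₁⟩ : ∃ j₀ j₁ : Fin 2, j₀ ≠ j₁ ∧ Δ j₁ ≤ 0 := by
      have := sub_sum_min_add_sub_sum_min_nonpos hprob hcons
      by_cases h : Δ 1 ≤ 0
      · exact ⟨0, 1, by decide, h⟩
      · exact ⟨1, 0, by decide, by linarith⟩
    obtain ⟨q, hq, hsum⟩ := exists_subcoupling_sum_eq hprob hcons hne h₁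
    calc RTriple r 2 2 p12 p23 p13 ≤ 1 - ∑ i, ∑ j, ∑ k, q i j k :=
          RTriple_le_of_subcoupling hprob hq
      _ = 2 * max (Δ j₀) 0 := by rw [hsum]; ring
      _ ≤ 2 * ⨆ j, max (Δ j) 0 := by
          gcongr; exact le_ciSup (Finite.bddAbove_range fun j => max (Δ j) 0) j₀
  · have : ⨆ j, max (Δ j) 0 ≤ RTriple r 2 2 p12 p23 p13 / 2 := ciSup_le fun j =>
      max_le (by linarith [two_mul_sub_sum_min_le_RTriple hprob hcons j 0])
        (by linarith [RTriple_nonneg hprob])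
    linarith

/-- exact incompatibility index on `[r] × [2] × [2]`.
Here the value `1 ∈ [2]` corresponds to `(0 : Fin 2)`. -/
theorem statement_9 (r : ℕ) (hr : 0 < r)
    (p12 : Fin r → Fin 2 → ℝ) (p23 : Fin 2 → Fin 2 → ℝ) (p13 : Fin r → Fin 2 → ℝ)
    (hprob : ProbTriple r 2 2 p12 p23 p13) (hcons : ConsTriple r 2 2 p12 p23 p13) :
    RTriple r 2 2 p12 p23 p13 =
      2 * sSup {t | ∃ j : Fin 2,
        t = max (p23 j 0 - ∑ i, min (p12 i j) (p13 i 0)) 0} :=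
  statement_9_general r p12 p23 p13 hprob hcons
end

section
/- Suppose the alphabets X_j = [m_j] are countable (m_j ∈ ℕ ∪ {∞}) and that ∅ ≠ J ⊆ [d] satisfies J ⊊ S for every S ∈ 𝕊. Suppose there is a probability distribution P^J on X_J, with mass function p^J, such that the marginal of P_S on X_J equals P^J for every S ∈ 𝕊. For x_J ∈ X_J with p^J(x_J) > 0 and S ∈ 𝕊, let P_{S|x_J} be the distribution on X_{S∖J} with mass function p_{S|x_J}(x_{S∖J}) = p_S(x_J, x_{S∖J})/p^J(x_J), and let R(P_{𝕊|x_J}) be the incompatibility index of the family (P_{S|x_J} : S ∈ 𝕊), computed with the collection {S ∖ J : S ∈ 𝕊} of subsets of [d] ∖ J (the map S ↦ S∖J is a bijection since J ⊆ S for all S ∈ 𝕊). Then R(P_𝕊) = ∑_{x_J ∈ X_J : p^J(x_J) > 0} p^J(x_J) · R(P_{𝕊|x_J}). -/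
open Finset

/-- The space `𝒳_S = ∏_{j ∈ S} 𝒳_j` for countable alphabets `𝒳_j`. -/
abbrev CellI {d : ℕ} (X : Fin d → Type*) (S : Finset (Fin d)) : Type _ :=
  ∀ j : {i : Fin d // i ∈ S}, X j.1

/-- Combine a value on the coordinates in `J` with a value on the coordinates in `S \ J`
into a value on the coordinates of `S` (when `J ⊆ S` this is the natural merge). -/
def mergeJ {d : ℕ} (X : Fin d → Type*) (J S : Finset (Fin d))
    (xJ : CellI X J) (z : CellI X (S \ J)) : CellI X S :=
  fun j => if h : j.1 ∈ J then xJ ⟨j.1, h⟩ else z ⟨j.1, Finset.mem_sdiff.mpr ⟨j.2, h⟩⟩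

/-- The incompatibility index `R(P_𝕊)` in the countable discrete case: the supremum of
`-(1/|𝕊|) ∑_{S ∈ 𝕊} ∑_{x_S} f_S(x_S) p_S(x_S)` over families of bounded functions
`f_S ≥ -1` with `∑_{S ∈ 𝕊} f_S(x_S) ≥ 0` for all `x ∈ 𝒳`. -/
noncomputable def RixC {d : ℕ} (X : Fin d → Type*) (𝕊 : Finset (Finset (Fin d)))
    (p : ∀ S : Finset (Fin d), CellI X S → ℝ) : ℝ :=
  sSup {t | ∃ f : ∀ S : Finset (Fin d), CellI X S → ℝ,
    (∀ S ∈ 𝕊, ∀ z, -1 ≤ f S z) ∧ (∀ S ∈ 𝕊, ∃ C, ∀ z, f S z ≤ C) ∧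
    (∀ x : ∀ j, X j, 0 ≤ ∑ S ∈ 𝕊, f S (fun j => x j.1)) ∧
    t = -(1 / (𝕊.card : ℝ)) * ∑ S ∈ 𝕊, ∑' z, f S z * p S z}

/-- The incompatibility index `R(P_{𝕊|x_J})` of the family of conditional distributions
`(P_{S|x_J} : S ∈ 𝕊)`, computed with the collection `{S \ J : S ∈ 𝕊}` of subsets of
`[d] \ J` (indexed here by `𝕊` itself, via the bijection `S ↦ S \ J`). -/
noncomputable def RixCond {d : ℕ} (X : Fin d → Type*) (𝕊 : Finset (Finset (Fin d)))
    (J : Finset (Fin d)) (p : ∀ S : Finset (Fin d), CellI X S → ℝ)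
    (pJ : CellI X J → ℝ) (xJ : CellI X J) : ℝ :=
  sSup {t | ∃ g : ∀ S : Finset (Fin d), CellI X (S \ J) → ℝ,
    (∀ S ∈ 𝕊, ∀ z, -1 ≤ g S z) ∧ (∀ S ∈ 𝕊, ∃ C, ∀ z, g S z ≤ C) ∧
    (∀ x : ∀ j : {i : Fin d // i ∉ J}, X j.1,
      0 ≤ ∑ S ∈ 𝕊, g S (fun j => x ⟨j.1, (Finset.mem_sdiff.mp j.2).2⟩)) ∧
    t = -(1 / (𝕊.card : ℝ)) *
          ∑ S ∈ 𝕊, ∑' z, g S z * (p S (mergeJ X J S xJ z) / pJ xJ)}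

def splitEquiv {d : ℕ} (X : Fin d → Type*) (J S : Finset (Fin d)) (hJS : J ⊆ S) :
    CellI X S ≃ CellI X J × CellI X (S \ J) where
  toFun w := (fun j => w ⟨j.1, hJS j.2⟩, fun j => w ⟨j.1, (Finset.mem_sdiff.mp j.2).1⟩)
  invFun q := mergeJ X J S q.1 q.2
  left_inv w := by funext j; simp only [mergeJ]; split <;> rfl
  right_inv q := by
    refine Prod.ext ?_ ?_
    · funext j; simp only [mergeJ]; rw [dif_pos j.2]
    · funext j; simp only [mergeJ]; rw [dif_neg (Finset.mem_sdiff.mp j.2).2]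

lemma merge_fst {d : ℕ} (X : Fin d → Type*) (J S : Finset (Fin d)) (hJS : J ⊆ S)
    (xJ : CellI X J) (z : CellI X (S \ J)) :
    (fun j : {i : Fin d // i ∈ J} => mergeJ X J S xJ z ⟨j.1, hJS j.2⟩) = xJ :=
  congrArg Prod.fst ((splitEquiv X J S hJS).right_inv (xJ, z))

lemma merge_snd {d : ℕ} (X : Fin d → Type*) (J S : Finset (Fin d)) (hJS : J ⊆ S)
    (xJ : CellI X J) (z : CellI X (S \ J)) :
    (fun j : {i : Fin d // i ∈ S \ J} => mergeJ X J S xJ z ⟨j.1, (Finset.mem_sdiff.mp j.2).1⟩) = z :=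
  congrArg Prod.snd ((splitEquiv X J S hJS).right_inv (xJ, z))

lemma summable_mul_of_bounds {α : Type*} {f p : α → ℝ} {A C : ℝ}
    (hp0 : ∀ z, 0 ≤ p z) (hps : Summable p)
    (hA : ∀ z, A ≤ f z) (hC : ∀ z, f z ≤ C) :
    Summable fun z => f z * p z := by
  have hb : ∀ z, |f z * p z| ≤ max |A| |C| * p z := by
    intro z
    rw [abs_mul, abs_of_nonneg (hp0 z)]
    have : |f z| ≤ max |A| |C| := by
      rw [abs_le]
      constructor
      · calc -(max |A| |C|) ≤ -|A| := neg_le_neg (le_max_left _ _)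
          _ ≤ A := neg_abs_le A
          _ ≤ f z := hA z
      · exact le_trans (hC z) (le_trans (le_abs_self C) (le_max_right _ _))
    exact mul_le_mul_of_nonneg_right this (hp0 z)
  exact Summable.of_abs (Summable.of_nonneg_of_le (fun z => abs_nonneg _) hb (hps.mul_left _))

lemma summable_fiber_tsum {β γ : Type*} {F : β × γ → ℝ} (hF : Summable F) :
    Summable fun b => ∑' c, F (b, c) := by
  have habs : Summable fun q => |F q| := hF.abs
  have h := (summable_prod_of_nonneg (fun q => abs_nonneg (F q))).mp habs
  refine Summable.of_abs (Summable.of_nonneg_of_le (fun b => abs_nonneg _) (fun b => ?_) h.2)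
  calc |∑' c, F (b, c)| ≤ ∑' c, |F (b, c)| := by
        simpa [Real.norm_eq_abs] using norm_tsum_le_tsum_norm (f := fun c => F (b, c)) (by
          simpa [Real.norm_eq_abs] using hF.abs.prod_factor b)
    _ = ∑' c, |F (b, c)| := rfl

lemma tsum_fiber {d : ℕ} (X : Fin d → Type*) (J S : Finset (Fin d)) (hJS : J ⊆ S)
    (F : CellI X S → ℝ) (hF : Summable F) :
    ∑' w, F w = ∑' xJ : CellI X J, ∑' z : CellI X (S \ J), F (mergeJ X J S xJ z) := by
  rw [← (splitEquiv X J S hJS).symm.tsum_eq F]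
  have hFs : Summable (fun q => F ((splitEquiv X J S hJS).symm q)) :=
    (Equiv.summable_iff _).mpr hF
  exact Summable.tsum_prod' hFs (fun b => hFs.prod_factor b)

lemma summable_fiber {d : ℕ} (X : Fin d → Type*) (J S : Finset (Fin d)) (hJS : J ⊆ S)
    (F : CellI X S → ℝ) (hF : Summable F) :
    Summable fun xJ : CellI X J => ∑' z : CellI X (S \ J), F (mergeJ X J S xJ z) := by
  have hFs : Summable (fun q => F ((splitEquiv X J S hJS).symm q)) :=
    (Equiv.summable_iff _).mpr hF
  exact summable_fiber_tsum hFs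

lemma summable_fiber_inner {d : ℕ} (X : Fin d → Type*) (J S : Finset (Fin d)) (hJS : J ⊆ S)
    (F : CellI X S → ℝ) (hF : Summable F) (xJ : CellI X J) :
    Summable fun z : CellI X (S \ J) => F (mergeJ X J S xJ z) := by
  have hFs : Summable (fun q => F ((splitEquiv X J S hJS).symm q)) :=
    (Equiv.summable_iff _).mpr hF
  exact hFs.prod_factor xJ

lemma sum_tsum_fiber {d : ℕ} (X : Fin d → Type*) (𝕊 : Finset (Finset (Fin d)))
    (J : Finset (Fin d)) (hsub : ∀ S ∈ 𝕊, J ⊆ S)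
    (F : ∀ S : Finset (Fin d), CellI X S → ℝ)
    (hFsum : ∀ S ∈ 𝕊, Summable (F S)) :
    (∑ S ∈ 𝕊, ∑' w, F S w)
      = ∑' xJ : CellI X J, ∑ S ∈ 𝕊, ∑' z, F S (mergeJ X J S xJ z) := by
  rw [Summable.tsum_finsetSum (fun S hS => summable_fiber X J S (hsub S hS) (F S) (hFsum S hS))]
  exact Finset.sum_congr rfl fun S hS => tsum_fiber X J S (hsub S hS) (F S) (hFsum S hS)

lemma summable_sum_fiber {d : ℕ} (X : Fin d → Type*) (𝕊 : Finset (Finset (Fin d)))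
    (J : Finset (Fin d)) (hsub : ∀ S ∈ 𝕊, J ⊆ S)
    (F : ∀ S : Finset (Fin d), CellI X S → ℝ)
    (hFsum : ∀ S ∈ 𝕊, Summable (F S)) :
    Summable fun xJ : CellI X J => ∑ S ∈ 𝕊, ∑' z, F S (mergeJ X J S xJ z) :=
  summable_sum fun S hS => summable_fiber X J S (hsub S hS) (F S) (hFsum S hS)

lemma value_le_one {ι : Type*} (𝕊 : Finset ι) (h𝕊 : 𝕊.Nonempty) {α : ι → Type*}
    (q : ∀ i, α i → ℝ) (hq0 : ∀ i ∈ 𝕊, ∀ z, 0 ≤ q i z) (hq1 : ∀ i ∈ 𝕊, HasSum (q i) 1)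
    (f : ∀ i, α i → ℝ) (hA : ∀ i ∈ 𝕊, ∀ z, -1 ≤ f i z) (hC : ∀ i ∈ 𝕊, ∃ C, ∀ z, f i z ≤ C) :
    -(1 / (𝕊.card : ℝ)) * ∑ i ∈ 𝕊, ∑' z, f i z * q i z ≤ 1 := by
  have hNpos : (0:ℝ) < 𝕊.card := by exact_mod_cast Finset.card_pos.mpr h𝕊
  have key : ∀ i ∈ 𝕊, -1 ≤ ∑' z, f i z * q i z := by
    intro i hi
    obtain ⟨C, hCi⟩ := hC i hi
    have hsum : Summable fun z => f i z * q i z :=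
      summable_mul_of_bounds (hq0 i hi) (hq1 i hi).summable (hA i hi) hCi
    calc (-1:ℝ) = ∑' z, (-1) * q i z := by
          rw [tsum_mul_left, (hq1 i hi).tsum_eq]; ring
      _ ≤ ∑' z, f i z * q i z := Summable.tsum_le_tsum
          (fun z => mul_le_mul_of_nonneg_right (hA i hi z) (hq0 i hi z))
          ((hq1 i hi).summable.mul_left _) hsum
  have hsumge : -(𝕊.card : ℝ) ≤ ∑ i ∈ 𝕊, ∑' z, f i z * q i z := by
    calc -(𝕊.card : ℝ) = ∑ _i ∈ 𝕊, (-1:ℝ) := by simp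
      _ ≤ _ := Finset.sum_le_sum key
  have h := mul_le_mul_of_nonpos_left hsumge
    (by simp only [neg_nonpos]; positivity : -(1 / (𝕊.card : ℝ)) ≤ 0)
  calc -(1 / (𝕊.card : ℝ)) * ∑ i ∈ 𝕊, ∑' z, f i z * q i z
      ≤ -(1 / (𝕊.card : ℝ)) * -(𝕊.card : ℝ) := h
    _ = 1 := by field_simp

lemma cond_value_eq {d : ℕ} (X : Fin d → Type*) (𝕊 : Finset (Finset (Fin d)))
    (J : Finset (Fin d)) (p : ∀ S : Finset (Fin d), CellI X S → ℝ)
    (pJ : CellI X J → ℝ) (xJ : CellI X J) (hne : pJ xJ ≠ 0)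
    (g : ∀ S : Finset (Fin d), CellI X (S \ J) → ℝ) :
    pJ xJ * (-(1 / (𝕊.card : ℝ)) * ∑ S ∈ 𝕊, ∑' z, g S z * (p S (mergeJ X J S xJ z) / pJ xJ))
      = -(1 / (𝕊.card : ℝ)) * ∑ S ∈ 𝕊, ∑' z, g S z * p S (mergeJ X J S xJ z) := by
  have h1 : ∀ S ∈ 𝕊, ∑' z, g S z * (p S (mergeJ X J S xJ z) / pJ xJ)
      = (∑' z, g S z * p S (mergeJ X J S xJ z)) / pJ xJ := by
    intro S _
    rw [← tsum_div_const]
    exact tsum_congr fun z => (mul_div_assoc _ _ _).symm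
  rw [Finset.sum_congr rfl h1, ← Finset.sum_div]
  rw [mul_comm (pJ xJ), mul_assoc, div_mul_cancel₀ _ hne]

/-- Proposition: conditioning on a block of variables common to every
observation pattern. If `J ⊊ S` for every `S ∈ 𝕊` and all the margins of the `P_S` on
`𝒳_J` coincide with `P^J`, then `R(P_𝕊) = ∑_{x_J} p^J(x_J) R(P_{𝕊|x_J})` (the terms with
`p^J(x_J) = 0` vanish). -/
theorem statement_12 {d : ℕ} (X : Fin d → Type*) [∀ j, Countable (X j)]
    [∀ j, Nonempty (X j)]
    (𝕊 : Finset (Finset (Fin d))) (h𝕊 : 𝕊.Nonempty) (hSne : ∀ S ∈ 𝕊, S.Nonempty)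
    (p : ∀ S : Finset (Fin d), CellI X S → ℝ)
    (hp : ∀ S ∈ 𝕊, (∀ z, 0 ≤ p S z) ∧ HasSum (p S) 1)
    (J : Finset (Fin d)) (hJne : J.Nonempty) (hJ : ∀ S ∈ 𝕊, J ⊂ S)
    (pJ : CellI X J → ℝ)
    (hmarg : ∀ S ∈ 𝕊, ∀ xJ : CellI X J,
      HasSum (fun z : CellI X (S \ J) => p S (mergeJ X J S xJ z)) (pJ xJ)) :
    RixC X 𝕊 p = ∑' xJ : CellI X J, pJ xJ * RixCond X 𝕊 J p pJ xJ := by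
  classical
  obtain ⟨S₀, hS₀⟩ := h𝕊
  have h𝕊 : 𝕊.Nonempty := ⟨S₀, hS₀⟩
  have hNpos : (0:ℝ) < (𝕊.card : ℝ) := by exact_mod_cast Finset.card_pos.mpr h𝕊
  have hsub : ∀ S ∈ 𝕊, J ⊆ S := fun S hS => (hJ S hS).subset
  have hpJ0 : ∀ xJ, 0 ≤ pJ xJ := fun xJ =>
    hasSum_le (fun z => (hp S₀ hS₀).1 _) hasSum_zero (hmarg S₀ hS₀ xJ)
  have hpJ1 : HasSum pJ 1 := by
    have h1 : HasSum
        (fun q : CellI X J × CellI X (S₀ \ J) =>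
          p S₀ ((splitEquiv X J S₀ (hsub S₀ hS₀)).symm q)) 1 :=
      ((splitEquiv X J S₀ (hsub S₀ hS₀)).symm.hasSum_iff).mpr (hp S₀ hS₀).2
    exact h1.prod_fiberwise (fun xJ => hmarg S₀ hS₀ xJ)
  have hpzero : ∀ S ∈ 𝕊, ∀ xJ, pJ xJ = 0 → ∀ z, p S (mergeJ X J S xJ z) = 0 := by
    intro S hS xJ h0 z
    have h := (hasSum_zero_iff_of_nonneg (fun z => (hp S hS).1 (mergeJ X J S xJ z))).mp
      (h0 ▸ hmarg S hS xJ)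
    exact congrFun h z
  have condHasSum : ∀ S ∈ 𝕊, ∀ xJ, pJ xJ ≠ 0 →
      HasSum (fun z => p S (mergeJ X J S xJ z) / pJ xJ) 1 := by
    intro S hS xJ h
    have := (hmarg S hS xJ).div_const (pJ xJ)
    rwa [div_self h] at this
  have condq0 : ∀ S ∈ 𝕊, ∀ xJ, ∀ z, 0 ≤ p S (mergeJ X J S xJ z) / pJ xJ :=
    fun S hS xJ z => div_nonneg ((hp S hS).1 _) (hpJ0 xJ)
  -- the defining sets
  set mainSet : Set ℝ := {t | ∃ f : ∀ S : Finset (Fin d), CellI X S → ℝ,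
    (∀ S ∈ 𝕊, ∀ z, -1 ≤ f S z) ∧ (∀ S ∈ 𝕊, ∃ C, ∀ z, f S z ≤ C) ∧
    (∀ x : ∀ j, X j, 0 ≤ ∑ S ∈ 𝕊, f S (fun j => x j.1)) ∧
    t = -(1 / (𝕊.card : ℝ)) * ∑ S ∈ 𝕊, ∑' z, f S z * p S z} with hmainSet
  set condSet : CellI X J → Set ℝ := fun xJ =>
    {t | ∃ g : ∀ S : Finset (Fin d), CellI X (S \ J) → ℝ,
    (∀ S ∈ 𝕊, ∀ z, -1 ≤ g S z) ∧ (∀ S ∈ 𝕊, ∃ C, ∀ z, g S z ≤ C) ∧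
    (∀ x : ∀ j : {i : Fin d // i ∉ J}, X j.1,
      0 ≤ ∑ S ∈ 𝕊, g S (fun j => x ⟨j.1, (Finset.mem_sdiff.mp j.2).2⟩)) ∧
    t = -(1 / (𝕊.card : ℝ)) *
          ∑ S ∈ 𝕊, ∑' z, g S z * (p S (mergeJ X J S xJ z) / pJ xJ)} with hcondSet
  have hRixC : RixC X 𝕊 p = sSup mainSet := rfl
  have hRixCond : ∀ xJ, RixCond X 𝕊 J p pJ xJ = sSup (condSet xJ) := fun _ => rfl
  -- zero members
  have main0 : (0:ℝ) ∈ mainSet := by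
    refine ⟨fun _ _ => 0, fun S hS z => by norm_num, fun S hS => ⟨0, fun z => le_refl 0⟩,
      fun x => by simp, by simp⟩
  have cond0 : ∀ xJ, (0:ℝ) ∈ condSet xJ := by
    intro xJ
    refine ⟨fun _ _ => 0, fun S hS z => by norm_num, fun S hS => ⟨0, fun z => le_refl 0⟩,
      fun x => by simp, by simp⟩
  -- upper bounds
  have mainUB : ∀ t ∈ mainSet, t ≤ 1 := by
    rintro t ⟨f, hA, hC, hpos, rfl⟩
    exact value_le_one 𝕊 h𝕊 p (fun S hS => (hp S hS).1) (fun S hS => (hp S hS).2) f hA hC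
  have condUB : ∀ xJ, ∀ t ∈ condSet xJ, t ≤ 1 := by
    intro xJ t ht
    obtain ⟨g, hA, hC, hpos, rfl⟩ := ht
    by_cases h0 : pJ xJ = 0
    · have : ∀ S ∈ 𝕊, (∑' z, g S z * (p S (mergeJ X J S xJ z) / pJ xJ)) = 0 := by
        intro S hS
        rw [show (∑' z, g S z * (p S (mergeJ X J S xJ z) / pJ xJ))
            = ∑' z : CellI X (S \ J), (0:ℝ) from
          tsum_congr fun z => by rw [h0, div_zero, mul_zero]]
        exact tsum_zero
      rw [Finset.sum_congr rfl this]
      simp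
    · exact value_le_one 𝕊 h𝕊 (fun S z => p S (mergeJ X J S xJ z) / pJ xJ)
        (fun S hS => condq0 S hS xJ) (fun S hS => condHasSum S hS xJ h0) g hA hC
  have mainBdd : BddAbove mainSet := ⟨1, mainUB⟩
  have condBdd : ∀ xJ, BddAbove (condSet xJ) := fun xJ => ⟨1, condUB xJ⟩
  have condNonneg : ∀ xJ, 0 ≤ RixCond X 𝕊 J p pJ xJ := by
    intro xJ; rw [hRixCond]; exact le_csSup (condBdd xJ) (cond0 xJ)
  have condLe1 : ∀ xJ, RixCond X 𝕊 J p pJ xJ ≤ 1 := by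
    intro xJ; rw [hRixCond]; exact csSup_le ⟨0, cond0 xJ⟩ (condUB xJ)
  have rhsSummable : Summable fun xJ => pJ xJ * RixCond X 𝕊 J p pJ xJ := by
    refine Summable.of_nonneg_of_le
      (fun xJ => mul_nonneg (hpJ0 xJ) (condNonneg xJ))
      (fun xJ => mul_le_of_le_one_right (hpJ0 xJ) (condLe1 xJ)) hpJ1.summable
  rw [hRixC]
  refine le_antisymm ?_ ?_
  · -- ≤ direction
    refine csSup_le ⟨0, main0⟩ ?_
    rintro t ⟨f, hfA, hfC, hfpos, rfl⟩
    choose C hC using hfC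
    have hFsum : ∀ S ∈ 𝕊, Summable (fun w => f S w * p S w) := fun S hS =>
      summable_mul_of_bounds (hp S hS).1 (hp S hS).2.summable (hfA S hS) (hC S hS)
    rw [sum_tsum_fiber X 𝕊 J hsub (fun S w => f S w * p S w) hFsum, ← tsum_mul_left]
    have hvsum : Summable (fun xJ : CellI X J =>
        -(1 / (𝕊.card : ℝ)) * ∑ S ∈ 𝕊, ∑' z,
          f S (mergeJ X J S xJ z) * p S (mergeJ X J S xJ z)) :=
      (summable_sum_fiber X 𝕊 J hsub (fun S w => f S w * p S w) hFsum).mul_left _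
    refine Summable.tsum_le_tsum (fun xJ => ?_) hvsum rhsSummable
    by_cases h0 : pJ xJ = 0
    · have hz : ∀ S ∈ 𝕊, (∑' z, f S (mergeJ X J S xJ z) * p S (mergeJ X J S xJ z)) = 0 := by
        intro S hS
        rw [show (∑' z, f S (mergeJ X J S xJ z) * p S (mergeJ X J S xJ z))
            = ∑' z : CellI X (S \ J), (0:ℝ) from
          tsum_congr fun z => by rw [hpzero S hS xJ h0 z, mul_zero]]
        exact tsum_zero
      rw [Finset.sum_congr rfl hz, h0]
      simp
    · have hmem : (-(1 / (𝕊.card : ℝ)) * ∑ S ∈ 𝕊, ∑' z,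
          f S (mergeJ X J S xJ z) * (p S (mergeJ X J S xJ z) / pJ xJ)) ∈ condSet xJ := by
        refine ⟨fun S z => f S (mergeJ X J S xJ z), fun S hS z => hfA S hS _,
          fun S hS => ⟨C S hS, fun z => hC S hS _⟩, ?_, rfl⟩
        intro x
        have h0' := hfpos (fun j => if h : j ∈ J then xJ ⟨j, h⟩ else x ⟨j, h⟩)
        refine le_trans h0' (le_of_eq (Finset.sum_congr rfl fun S hS => ?_))
        refine congrArg (f S) (funext fun j => ?_)
        by_cases h : j.1 ∈ J
        · simp [mergeJ, h]
        · simp [mergeJ, h]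
      have hle : (-(1 / (𝕊.card : ℝ)) * ∑ S ∈ 𝕊, ∑' z,
          f S (mergeJ X J S xJ z) * (p S (mergeJ X J S xJ z) / pJ xJ))
          ≤ RixCond X 𝕊 J p pJ xJ := by
        rw [hRixCond]; exact le_csSup (condBdd xJ) hmem
      calc -(1 / (𝕊.card : ℝ)) * ∑ S ∈ 𝕊, ∑' z,
            f S (mergeJ X J S xJ z) * p S (mergeJ X J S xJ z)
          = pJ xJ * (-(1 / (𝕊.card : ℝ)) * ∑ S ∈ 𝕊, ∑' z,
            f S (mergeJ X J S xJ z) * (p S (mergeJ X J S xJ z) / pJ xJ)) :=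
            (cond_value_eq X 𝕊 J p pJ xJ h0 (fun S z => f S (mergeJ X J S xJ z))).symm
        _ ≤ pJ xJ * RixCond X 𝕊 J p pJ xJ :=
            mul_le_mul_of_nonneg_left hle (hpJ0 xJ)
  · refine le_of_forall_pos_le_add fun ε hε => ?_
    have exG : ∀ xJ : CellI X J, ∃ g : ∀ S : Finset (Fin d), CellI X (S \ J) → ℝ,
        (∀ S ∈ 𝕊, ∀ z, -1 ≤ g S z) ∧ (∀ S ∈ 𝕊, ∀ z, g S z ≤ (𝕊.card : ℝ)) ∧
        (∀ x : ∀ j : {i : Fin d // i ∉ J}, X j.1,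
          0 ≤ ∑ S ∈ 𝕊, g S (fun j => x ⟨j.1, (Finset.mem_sdiff.mp j.2).2⟩)) ∧
        (pJ xJ ≠ 0 → RixCond X 𝕊 J p pJ xJ - ε ≤ -(1 / (𝕊.card : ℝ)) *
            ∑ S ∈ 𝕊, ∑' z, g S z * (p S (mergeJ X J S xJ z) / pJ xJ)) := by
      intro xJ
      by_cases h0 : pJ xJ = 0
      · exact ⟨fun _ _ => 0, fun S hS z => by norm_num, fun S hS z => le_of_lt hNpos,
          fun x => by simp, fun h => absurd h0 h⟩
      · have hlt : RixCond X 𝕊 J p pJ xJ - ε < sSup (condSet xJ) := by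
          rw [hRixCond]; exact sub_lt_self _ hε
        obtain ⟨t, ht, htgt⟩ := exists_lt_of_lt_csSup ⟨0, cond0 xJ⟩ hlt
        obtain ⟨g, hgA, hgC, hgpos, rfl⟩ := ht
        choose Cg hCg using hgC
        refine ⟨fun S z => min (g S z) (𝕊.card : ℝ),
          fun S hS z => le_min (hgA S hS z) (by linarith),
          fun S hS z => min_le_right _ _, ?_, fun _ => ?_⟩
        · intro x
          by_cases hall : ∀ S ∈ 𝕊,
              g S (fun j => x ⟨j.1, (Finset.mem_sdiff.mp j.2).2⟩) ≤ (𝕊.card : ℝ)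
          · refine le_trans (hgpos x) (le_of_eq (Finset.sum_congr rfl fun S hS => ?_))
            exact (min_eq_left (hall S hS)).symm
          · push_neg at hall
            obtain ⟨S', hS', hgt⟩ := hall
            have h1 : min (g S' (fun j => x ⟨j.1, (Finset.mem_sdiff.mp j.2).2⟩)) (𝕊.card : ℝ)
                = (𝕊.card : ℝ) := min_eq_right (le_of_lt hgt)
            have h2 : -(((𝕊.erase S').card : ℝ)) ≤ ∑ S ∈ 𝕊.erase S',
                min (g S (fun j => x ⟨j.1, (Finset.mem_sdiff.mp j.2).2⟩)) (𝕊.card : ℝ) := by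
              calc -(((𝕊.erase S').card : ℝ)) = ∑ _S ∈ 𝕊.erase S', (-1:ℝ) := by simp
                _ ≤ _ := Finset.sum_le_sum fun S hS =>
                    le_min (hgA S (Finset.mem_of_mem_erase hS) _) (by linarith)
            have h3 : (((𝕊.erase S').card) : ℝ) = (𝕊.card : ℝ) - 1 := by
              rw [Finset.card_erase_of_mem hS']
              have h4 : 1 ≤ 𝕊.card := Finset.card_pos.mpr ⟨S', hS'⟩
              rw [Nat.cast_sub h4, Nat.cast_one]
            calc (0:ℝ) ≤ (𝕊.card : ℝ) + (∑ S ∈ 𝕊.erase S',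
                  min (g S (fun j => x ⟨j.1, (Finset.mem_sdiff.mp j.2).2⟩)) (𝕊.card : ℝ)) := by
                  linarith
              _ = min (g S' (fun j => x ⟨j.1, (Finset.mem_sdiff.mp j.2).2⟩)) (𝕊.card : ℝ)
                  + ∑ S ∈ 𝕊.erase S',
                  min (g S (fun j => x ⟨j.1, (Finset.mem_sdiff.mp j.2).2⟩)) (𝕊.card : ℝ) := by
                  rw [h1]
              _ = _ := Finset.add_sum_erase 𝕊
                  (fun S => min (g S (fun j => x ⟨j.1, (Finset.mem_sdiff.mp j.2).2⟩)) (𝕊.card : ℝ)) hS'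
        · have key : ∀ S ∈ 𝕊,
              (∑' z, min (g S z) (𝕊.card : ℝ) * (p S (mergeJ X J S xJ z) / pJ xJ))
              ≤ ∑' z, g S z * (p S (mergeJ X J S xJ z) / pJ xJ) := by
            intro S hS
            refine Summable.tsum_le_tsum (fun z => mul_le_mul_of_nonneg_right (min_le_left _ _)
              (condq0 S hS xJ z)) ?_ ?_
            · exact summable_mul_of_bounds (condq0 S hS xJ) (condHasSum S hS xJ h0).summable
                (fun z => le_min (hgA S hS z) (by linarith)) (fun z => min_le_right _ _)
            · exact summable_mul_of_bounds (condq0 S hS xJ) (condHasSum S hS xJ h0).summable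
                (hgA S hS) (hCg S hS)
          have hmono := Finset.sum_le_sum key
          have hmul := mul_le_mul_of_nonpos_left hmono
            (show -(1/((𝕊.card):ℝ)) ≤ 0 by simp only [neg_nonpos]; positivity)
          linarith
    choose G hG1 hG2 hG3 hG4 using exG
    set f : ∀ S : Finset (Fin d), CellI X S → ℝ := fun S w =>
      if h : J ⊆ S then
        G (fun j => w ⟨j.1, h j.2⟩) S (fun j => w ⟨j.1, (Finset.mem_sdiff.mp j.2).1⟩)
      else 0 with hf
    have hfeval : ∀ S ∈ 𝕊, ∀ xJ z, f S (mergeJ X J S xJ z) = G xJ S z := by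
      intro S hS xJ z
      simp only [hf]
      rw [dif_pos (hsub S hS)]
      rw [merge_fst X J S (hsub S hS) xJ z, merge_snd X J S (hsub S hS) xJ z]
    have hfA : ∀ S ∈ 𝕊, ∀ w, -1 ≤ f S w := by
      intro S hS w
      simp only [hf, dif_pos (hsub S hS)]
      exact hG1 _ S hS _
    have hfC : ∀ S ∈ 𝕊, ∀ w, f S w ≤ (𝕊.card : ℝ) := by
      intro S hS w
      simp only [hf, dif_pos (hsub S hS)]
      exact hG2 _ S hS _
    have hfpos : ∀ x : ∀ j, X j, 0 ≤ ∑ S ∈ 𝕊, f S (fun j => x j.1) := by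
      intro x
      have h := hG3 (fun j : {i : Fin d // i ∈ J} => x j.1)
        (fun j : {i : Fin d // i ∉ J} => x j.1)
      refine le_trans h (le_of_eq (Finset.sum_congr rfl fun S hS => ?_))
      simp only [hf, dif_pos (hsub S hS)]
    have hFsum : ∀ S ∈ 𝕊, Summable fun w => f S w * p S w := fun S hS =>
      summable_mul_of_bounds (hp S hS).1 (hp S hS).2.summable (hfA S hS) (hfC S hS)
    have hmem : (-(1/((𝕊.card):ℝ)) * ∑ S ∈ 𝕊, ∑' w, f S w * p S w) ∈ mainSet :=
      ⟨f, hfA, fun S hS => ⟨_, hfC S hS⟩, hfpos, rfl⟩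
    have hle : (-(1/((𝕊.card):ℝ)) * ∑ S ∈ 𝕊, ∑' w, f S w * p S w) ≤ sSup mainSet :=
      le_csSup mainBdd hmem
    have hdec : (-(1/((𝕊.card):ℝ)) * ∑ S ∈ 𝕊, ∑' w, f S w * p S w)
        = ∑' xJ : CellI X J, -(1/((𝕊.card):ℝ)) * ∑ S ∈ 𝕊, ∑' z,
            G xJ S z * p S (mergeJ X J S xJ z) := by
      rw [sum_tsum_fiber X 𝕊 J hsub (fun S w => f S w * p S w) hFsum, ← tsum_mul_left]
      refine tsum_congr fun xJ => ?_
      congr 1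
      exact Finset.sum_congr rfl fun S hS => tsum_congr fun z => by rw [hfeval S hS xJ z]
    have hvsum : Summable (fun xJ : CellI X J => -(1/((𝕊.card):ℝ)) * ∑ S ∈ 𝕊, ∑' z,
        G xJ S z * p S (mergeJ X J S xJ z)) := by
      have h := (summable_sum_fiber X 𝕊 J hsub (fun S w => f S w * p S w) hFsum).mul_left
        (-(1/((𝕊.card):ℝ)))
      refine h.congr fun xJ => ?_
      congr 1
      exact Finset.sum_congr rfl fun S hS => tsum_congr fun z => by rw [hfeval S hS xJ z]
    have hpt : ∀ xJ, pJ xJ * RixCond X 𝕊 J p pJ xJ - ε * pJ xJ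
        ≤ -(1/((𝕊.card):ℝ)) * ∑ S ∈ 𝕊, ∑' z, G xJ S z * p S (mergeJ X J S xJ z) := by
      intro xJ
      by_cases h0 : pJ xJ = 0
      · have hz : ∀ S ∈ 𝕊, (∑' z, G xJ S z * p S (mergeJ X J S xJ z)) = 0 := by
          intro S hS
          rw [show (∑' z, G xJ S z * p S (mergeJ X J S xJ z))
              = ∑' z : CellI X (S \ J), (0:ℝ) from
            tsum_congr fun z => by rw [hpzero S hS xJ h0 z, mul_zero]]
          exact tsum_zero
        rw [Finset.sum_congr rfl hz, h0]
        simp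
      · have h4 := hG4 xJ h0
        have hmul := mul_le_mul_of_nonneg_left h4 (hpJ0 xJ)
        rw [cond_value_eq X 𝕊 J p pJ xJ h0 (G xJ)] at hmul
        calc pJ xJ * RixCond X 𝕊 J p pJ xJ - ε * pJ xJ
            = pJ xJ * (RixCond X 𝕊 J p pJ xJ - ε) := by ring
          _ ≤ _ := hmul
    have hLsum : Summable (fun xJ => pJ xJ * RixCond X 𝕊 J p pJ xJ - ε * pJ xJ) :=
      rhsSummable.sub (hpJ1.summable.mul_left ε)
    have hfinal := Summable.tsum_le_tsum hpt hLsum hvsum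
    rw [Summable.tsum_sub rhsSummable (hpJ1.summable.mul_left ε), tsum_mul_left, hpJ1.tsum_eq,
      mul_one] at hfinal
    rw [← hdec] at hfinal
    linarith
end

section
/- Suppose that 𝕊_1, 𝕊_2 ⊆ 𝕊 satisfy 𝕊_1 ∪ 𝕊_2 = 𝕊, and that J ∈ 𝕊 is a cut set for 𝕊_1 and 𝕊_2, meaning 𝕊_1 ∩ 𝕊_2 = {J} and (∪_{S∈𝕊_1} S) ∩ (∪_{S∈𝕊_2} S) = J. Then for every P_𝕊 ∈ 𝒫_𝕊, max{ R(P_{𝕊_1}), R(P_{𝕊_2}) } ≤ R(P_𝕊) ≤ R(P_{𝕊_1}) + R(P_{𝕊_2}), where for 𝕊' ⊆ 𝕊, R(P_{𝕊'}) denotes the incompatibility index of the subfamily (P_S : S ∈ 𝕊') computed with the collection 𝕊'. -/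
open Finset

/-- The space `𝒳_S = ∏_{j ∈ S} [m_j]`. -/
abbrev Cell {d : ℕ} (m : Fin d → ℕ) (S : Finset (Fin d)) : Type :=
  ∀ j : {x : Fin d // x ∈ S}, Fin (m j.1)

/-- The full space `𝒳 = ∏_{j=1}^d [m_j]`. -/
abbrev Full {d : ℕ} (m : Fin d → ℕ) : Type := ∀ j, Fin (m j)

/-- Coordinate projection `x ↦ x_S`. -/
def proj {d : ℕ} (m : Fin d → ℕ) (S : Finset (Fin d)) (x : Full m) : Cell m S :=
  fun j => x j.1

/-- Coordinate projection `𝒳_S → 𝒳_T` for `T ⊆ S`. -/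
def projSub {d : ℕ} (m : Fin d → ℕ) {S T : Finset (Fin d)} (h : T ⊆ S) (z : Cell m S) :
    Cell m T :=
  fun j => z ⟨j.1, h j.2⟩

/-- `p` is a probability mass function. -/
def IsPMF {α : Type*} [Fintype α] (p : α → ℝ) : Prop :=
  (∀ x, 0 ≤ p x) ∧ ∑ x, p x = 1

/-- `p` is a family of probability mass functions indexed by `𝕊`. -/
def IsFamily {d : ℕ} (m : Fin d → ℕ) (𝕊 : Finset (Finset (Fin d)))
    (p : ∀ S : Finset (Fin d), Cell m S → ℝ) : Prop :=
  ∀ S ∈ 𝕊, IsPMF (p S)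

/-- The family `P_𝕊` is compatible: there is a joint pmf on `𝒳` with the given margins. -/
def Compatible {d : ℕ} (m : Fin d → ℕ) (𝕊 : Finset (Finset (Fin d)))
    (p : ∀ S : Finset (Fin d), Cell m S → ℝ) : Prop :=
  ∃ q : Full m → ℝ, IsPMF q ∧
    ∀ S ∈ 𝕊, ∀ y : Cell m S, p S y = ∑ x : Full m, if proj m S x = y then q x else 0

/-- The marginal mass function of `pS` on `𝒳_T`, for `T ⊆ S`. -/
noncomputable def marg {d : ℕ} (m : Fin d → ℕ) {S : Finset (Fin d)} (T : Finset (Fin d)) (h : T ⊆ S)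
    (pS : Cell m S → ℝ) (y : Cell m T) : ℝ :=
  ∑ z : Cell m S, if projSub m h z = y then pS z else 0

/-- The family `P_𝕊` is consistent: overlapping margins agree. -/
def Consistent {d : ℕ} (m : Fin d → ℕ) (𝕊 : Finset (Finset (Fin d)))
    (p : ∀ S : Finset (Fin d), Cell m S → ℝ) : Prop :=
  ∀ S₁ ∈ 𝕊, ∀ S₂ ∈ 𝕊, (S₁ ∩ S₂).Nonempty →
    marg m (S₁ ∩ S₂) inter_subset_left (p S₁) =
      marg m (S₁ ∩ S₂) inter_subset_right (p S₂)

/-- The class `𝒢_𝕊^+`. -/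
def GPlus {d : ℕ} (m : Fin d → ℕ) (𝕊 : Finset (Finset (Fin d)))
    (f : ∀ S : Finset (Fin d), Cell m S → ℝ) : Prop :=
  (∀ S ∈ 𝕊, ∀ y, -1 ≤ f S y) ∧ ∀ x : Full m, 0 ≤ ∑ S ∈ 𝕊, f S (proj m S x)

/-- The linear functional `R(P_𝕊, f_𝕊)`. -/
noncomputable def RL {d : ℕ} (m : Fin d → ℕ) (𝕊 : Finset (Finset (Fin d)))
    (p f : ∀ S : Finset (Fin d), Cell m S → ℝ) : ℝ :=
  -(1 / (𝕊.card : ℝ)) * ∑ S ∈ 𝕊, ∑ y, f S y * p S y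

/-- The incompatibility index `R(P_𝕊)`. -/
noncomputable def Rix {d : ℕ} (m : Fin d → ℕ) (𝕊 : Finset (Finset (Fin d)))
    (p : ∀ S : Finset (Fin d), Cell m S → ℝ) : ℝ :=
  sSup {t | ∃ f, GPlus m 𝕊 f ∧ t = RL m 𝕊 p f}

/-- Total variation distance between two mass functions on a finite space. -/
noncomputable def dTV {α : Type*} [Fintype α] (p q : α → ℝ) : ℝ :=
  sSup {t | ∃ A : Finset α, t = |∑ y ∈ A, (p y - q y)|}

/-!
The substitution `h_S = (f_S + 1) / |𝕊|` turns `R(P_𝕊)` into the supremum of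
`1 - ∑_S E_{P_S} h_S` over fractional covers: `h ≥ 0` with `∑_S h_S(x_S) ≥ 1` for every `x`.
Extending a cover of a subcollection by zero gives monotonicity. For subadditivity, split a cover
`g` of `𝕊` at the cut set `J`: let `k(y)` be the minimum of `1` and of `∑_{S ∈ 𝕊₂ \ {J}} g_S(x_S)`
over the `x` with `x_J = y`. Then `g` with `k` added at `J` covers `𝕊₁` (glue `x` to a minimiser
along `J`, which is possible because the two unions meet only in `J`), `g` with `1 - k` in place
of `g_J` covers `𝕊₂`, and the two expectation sums add up to that of `g` plus one.
-/

section FinsetSums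

variable {ι M : Type*} [AddCommMonoid M]

theorem sum_update_eq_add_sum_erase [DecidableEq ι] {β : ι → Type*} {s : Finset ι} {i : ι}
    (hi : i ∈ s) (g : ∀ j, β j) (v : β i) (Φ : ∀ j, β j → M) :
    ∑ j ∈ s, Φ j (Function.update g i v j) = Φ i v + ∑ j ∈ s.erase i, Φ j (g j) := by
  rw [← add_sum_erase s _ hi, Function.update_self]
  congr 1
  exact sum_congr rfl fun j hj => by rw [Function.update_of_ne (ne_of_mem_erase hj)]

theorem sum_union_eq_sum_add_sum_erase [DecidableEq ι] {s t : Finset ι} {a : ι} (hst : s ∩ t = {a})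
    (F : ι → M) : ∑ j ∈ s ∪ t, F j = ∑ j ∈ s, F j + ∑ j ∈ t.erase a, F j := by
  have ht : t \ s = t.erase a := by
    rw [← sdiff_inter_self_left, inter_comm, hst, sdiff_singleton_eq_erase]
  rw [← union_sdiff_self_eq_union, sum_union disjoint_sdiff, ht]

theorem sum_mul_add_const {R : Type*} [CommSemiring R] (s : Finset ι) (a c : R) (F : ι → R) :
    ∑ j ∈ s, (a * F j + c) = a * ∑ j ∈ s, F j + c * #s := by
  rw [sum_add_distrib, ← mul_sum, sum_const, nsmul_eq_mul, mul_comm c]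

end FinsetSums

section Marginals

variable {d : ℕ} {m : Fin d → ℕ}

theorem exists_proj_eq_of_sup_inter_subset {𝕊₁ 𝕊₂ : Finset (Finset (Fin d))} {J : Finset (Fin d)}
    (hcut : 𝕊₁.sup id ∩ 𝕊₂.sup id ⊆ J) {x x' : Full m} (hxx' : proj m J x = proj m J x') :
    ∃ z : Full m, (∀ S ∈ 𝕊₁, proj m S z = proj m S x) ∧ ∀ S ∈ 𝕊₂, proj m S z = proj m S x' := by
  classical
  refine ⟨fun j => if j ∈ 𝕊₁.sup id then x j else x' j, fun S hS => ?_, fun S hS => ?_⟩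
  all_goals funext j
  · simp [proj, le_sup (f := id) hS j.2]
  · have hj₂ : j.1 ∈ 𝕊₂.sup id := le_sup (f := id) hS j.2
    by_cases hj₁ : j.1 ∈ 𝕊₁.sup id
    · simpa [proj, hj₁] using congrFun hxx' ⟨j.1, hcut (mem_inter.2 ⟨hj₁, hj₂⟩)⟩
    · simp [proj, hj₁]

noncomputable def fiberInf (J : Finset (Fin d)) (G : Full m → ℝ) (y : Cell m J) : ℝ :=
  ⨅ x : {x : Full m // proj m J x = y}, G x

theorem fiberInf_le (J : Finset (Fin d)) (G : Full m → ℝ) (x : Full m) :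
    fiberInf J G (proj m J x) ≤ G x :=
  ciInf_le (Set.finite_range fun x' : {x' // proj m J x' = proj m J x} => G x').bddBelow ⟨x, rfl⟩

theorem exists_eq_fiberInf (J : Finset (Fin d)) (G : Full m → ℝ) (x : Full m) :
    ∃ x', proj m J x' = proj m J x ∧ G x' = fiberInf J G (proj m J x) := by
  have : Nonempty {x' : Full m // proj m J x' = proj m J x} := ⟨⟨x, rfl⟩⟩
  obtain ⟨⟨x', hx'⟩, h⟩ :=
    exists_eq_ciInf_of_finite (f := fun x' : {x' // proj m J x' = proj m J x} => G x')
  exact ⟨x', hx', h⟩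

theorem fiberInf_nonneg (J : Finset (Fin d)) {G : Full m → ℝ} (hG : ∀ x, 0 ≤ G x)
    (y : Cell m J) : 0 ≤ fiberInf J G y :=
  Real.iInf_nonneg fun x => hG x

end Marginals

section Covers

variable {d : ℕ} {m : Fin d → ℕ}

def IsCover (m : Fin d → ℕ) (𝕊 : Finset (Finset (Fin d)))
    (h : ∀ S : Finset (Fin d), Cell m S → ℝ) : Prop :=
  (∀ S ∈ 𝕊, ∀ y, 0 ≤ h S y) ∧ ∀ x : Full m, 1 ≤ ∑ S ∈ 𝕊, h S (proj m S x)

def sumExpect (𝕊 : Finset (Finset (Fin d))) (p h : ∀ S : Finset (Fin d), Cell m S → ℝ) : ℝ :=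
  ∑ S ∈ 𝕊, ∑ y, h S y * p S y

def coverValues (m : Fin d → ℕ) (𝕊 : Finset (Finset (Fin d)))
    (p : ∀ S : Finset (Fin d), Cell m S → ℝ) : Set ℝ :=
  {t | ∃ h, IsCover m 𝕊 h ∧ t = 1 - sumExpect 𝕊 p h}

variable {𝕊 : Finset (Finset (Fin d))} {p : ∀ S : Finset (Fin d), Cell m S → ℝ}

theorem sumExpect_mul_add (hp : ∀ S ∈ 𝕊, ∑ y, p S y = 1) (a c : ℝ)
    (h : ∀ S : Finset (Fin d), Cell m S → ℝ) :
    sumExpect 𝕊 p (fun S y => a * h S y + c) = a * sumExpect 𝕊 p h + c * #𝕊 := by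
  have hS : ∀ S ∈ 𝕊, ∑ y, (a * h S y + c) * p S y = a * ∑ y, h S y * p S y + c := fun S hS => by
    simp only [add_mul, sum_add_distrib, mul_assoc, ← mul_sum, hp S hS, mul_one]
  rw [sumExpect, sum_congr rfl hS, sum_add_distrib, ← mul_sum, sum_const, nsmul_eq_mul,
    sumExpect, mul_comm c]

theorem Rix_eq_sSup_coverValues (h𝕊 : 𝕊.Nonempty) (hp : ∀ S ∈ 𝕊, ∑ y, p S y = 1) :
    Rix m 𝕊 p = sSup (coverValues m 𝕊 p) := by
  have hN : (0 : ℝ) < #𝕊 := by exact_mod_cast h𝕊.card_pos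
  unfold Rix coverValues
  congr 1
  ext t
  constructor
  · rintro ⟨f, ⟨hf, hfx⟩, rfl⟩
    refine ⟨fun S y => (#𝕊 : ℝ)⁻¹ * f S y + (#𝕊 : ℝ)⁻¹, ⟨fun S hS y => ?_, fun x => ?_⟩, ?_⟩
    · have := hf S hS y
      dsimp only
      rw [← mul_add_one]
      exact mul_nonneg (by positivity) (by linarith)
    · rw [sum_mul_add_const, inv_mul_cancel₀ hN.ne']
      have := hfx x
      have : 0 ≤ (#𝕊 : ℝ)⁻¹ * ∑ S ∈ 𝕊, f S (proj m S x) := by positivity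
      linarith
    · rw [sumExpect_mul_add hp, RL, sumExpect, inv_mul_cancel₀ hN.ne']
      ring
  · rintro ⟨h, ⟨hh, hhx⟩, rfl⟩
    refine ⟨fun S y => #𝕊 * h S y + -1, ⟨fun S hS y => ?_, fun x => ?_⟩, ?_⟩
    · have := mul_nonneg hN.le (hh S hS y)
      dsimp only
      linarith
    · rw [sum_mul_add_const]
      have := mul_le_mul_of_nonneg_left (hhx x) hN.le
      linarith
    · rw [RL, ← sumExpect, sumExpect_mul_add hp]
      field_simp
      ring

theorem coverValues_nonempty (h𝕊 : 𝕊.Nonempty) : (coverValues m 𝕊 p).Nonempty := by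
  refine ⟨_, fun _ _ => 1, ⟨fun _ _ _ => zero_le_one, fun x => ?_⟩, rfl⟩
  simpa using h𝕊.card_pos

theorem coverValues_bddAbove (hp : ∀ S ∈ 𝕊, ∀ y, 0 ≤ p S y) : BddAbove (coverValues m 𝕊 p) := by
  refine ⟨1, ?_⟩
  rintro _ ⟨h, ⟨hh, -⟩, rfl⟩
  have : 0 ≤ sumExpect 𝕊 p h :=
    sum_nonneg fun S hS => sum_nonneg fun y _ => mul_nonneg (hh S hS y) (hp S hS y)
  linarith

theorem coverValues_mono {𝕊' : Finset (Finset (Fin d))} (hsub : 𝕊' ⊆ 𝕊) :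
    coverValues m 𝕊' p ⊆ coverValues m 𝕊 p := by
  classical
  rintro _ ⟨h, ⟨hh, hhx⟩, rfl⟩
  have hext : ∀ F : Finset (Fin d) → ℝ,
      ∑ S ∈ 𝕊, (if S ∈ 𝕊' then F S else 0) = ∑ S ∈ 𝕊', F S := fun F => by
    rw [sum_ite_mem, inter_eq_right.2 hsub]
  refine ⟨fun S y => if S ∈ 𝕊' then h S y else 0, ⟨fun S _ y => ?_, fun x => ?_⟩, ?_⟩
  · dsimp only
    split_ifs with hS
    exacts [hh S hS y, le_rfl]
  · simpa only [hext] using hhx x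
  · simp only [sumExpect, ite_mul, zero_mul, sum_ite_irrel, sum_const_zero]
    rw [hext]

theorem Rix_mono {𝕊' : Finset (Finset (Fin d))} (h𝕊' : 𝕊'.Nonempty) (hsub : 𝕊' ⊆ 𝕊)
    (hp : IsFamily m 𝕊 p) : Rix m 𝕊' p ≤ Rix m 𝕊 p := by
  rw [Rix_eq_sSup_coverValues h𝕊' fun S hS => (hp S (hsub hS)).2,
    Rix_eq_sSup_coverValues (h𝕊'.mono hsub) fun S hS => (hp S hS).2]
  exact csSup_le_csSup (coverValues_bddAbove fun S hS => (hp S hS).1)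
    (coverValues_nonempty h𝕊') (coverValues_mono hsub)

end Covers

section Cut

variable {d : ℕ} {m : Fin d → ℕ} {𝕊 𝕊₁ 𝕊₂ : Finset (Finset (Fin d))} {J : Finset (Fin d)}
  {p : ∀ S : Finset (Fin d), Cell m S → ℝ}

theorem one_le_add_fiberInf_of_cut (hunion : 𝕊₁ ∪ 𝕊₂ = 𝕊) (hinter : 𝕊₁ ∩ 𝕊₂ = {J})
    (hcut : 𝕊₁.sup id ∩ 𝕊₂.sup id ⊆ J) {g : ∀ S : Finset (Fin d), Cell m S → ℝ}
    (hg : IsCover m 𝕊 g) (x : Full m) :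
    1 ≤ ∑ S ∈ 𝕊₁, g S (proj m S x) +
      fiberInf J (fun x' => ∑ S ∈ 𝕊₂.erase J, g S (proj m S x')) (proj m J x) := by
  obtain ⟨x', hx'J, hx'⟩ := exists_eq_fiberInf J (fun x' => ∑ S ∈ 𝕊₂.erase J, g S (proj m S x')) x
  obtain ⟨z, hz₁, hz₂⟩ := exists_proj_eq_of_sup_inter_subset hcut hx'J.symm
  rw [← hx']
  calc 1 ≤ ∑ S ∈ 𝕊, g S (proj m S z) := hg.2 z
    _ = ∑ S ∈ 𝕊₁, g S (proj m S z) + ∑ S ∈ 𝕊₂.erase J, g S (proj m S z) := by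
        rw [← hunion, sum_union_eq_sum_add_sum_erase hinter]
    _ = _ := by
        congr 1
        exacts [sum_congr rfl fun S hS => by rw [hz₁ S hS],
          sum_congr rfl fun S hS => by rw [hz₂ S (mem_of_mem_erase hS)]]

theorem exists_isCover_add_isCover_of_cut (hunion : 𝕊₁ ∪ 𝕊₂ = 𝕊) (hinter : 𝕊₁ ∩ 𝕊₂ = {J})
    (hcut : 𝕊₁.sup id ∩ 𝕊₂.sup id ⊆ J) (hpJ : ∑ y, p J y = 1)
    {g : ∀ S : Finset (Fin d), Cell m S → ℝ} (hg : IsCover m 𝕊 g) :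
    ∃ h₁ h₂, IsCover m 𝕊₁ h₁ ∧ IsCover m 𝕊₂ h₂ ∧
      sumExpect 𝕊₁ p h₁ + sumExpect 𝕊₂ p h₂ = sumExpect 𝕊 p g + 1 := by
  obtain ⟨hJ₁, hJ₂⟩ := mem_inter.1 (hinter ▸ mem_singleton_self J : J ∈ 𝕊₁ ∩ 𝕊₂)
  have hg₁ : ∀ S ∈ 𝕊₁, ∀ y, 0 ≤ g S y := fun S hS => hg.1 S (hunion ▸ mem_union_left _ hS)
  have hg₂ : ∀ S ∈ 𝕊₂, ∀ y, 0 ≤ g S y := fun S hS => hg.1 S (hunion ▸ mem_union_right _ hS)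
  set G₂ : Full m → ℝ := fun x => ∑ S ∈ 𝕊₂.erase J, g S (proj m S x)
  set k : Cell m J → ℝ := fun y => min 1 (fiberInf J G₂ y)
  have hk₀ : ∀ y, 0 ≤ k y := fun y => le_min zero_le_one <| fiberInf_nonneg J
    (fun x => sum_nonneg fun S hS => hg₂ S (mem_of_mem_erase hS) _) y
  refine ⟨Function.update g J (fun y => g J y + k y), Function.update g J (fun y => 1 - k y),
    ⟨fun S hS y => ?_, fun x => ?_⟩, ⟨fun S hS y => ?_, fun x => ?_⟩, ?_⟩
  · rcases eq_or_ne S J with rfl | hSJ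
    · simpa using add_nonneg (hg₁ S hS y) (hk₀ y)
    · simpa [Function.update_of_ne hSJ] using hg₁ S hS y
  · have e := sum_update_eq_add_sum_erase hJ₁ g (fun y => g J y + k y) fun S u => u (proj m S x)
    have hsplit := add_sum_erase 𝕊₁ (fun S => g S (proj m S x)) hJ₁
    have hcover : 1 ≤ ∑ S ∈ 𝕊₁, g S (proj m S x) + k (proj m J x) := by
      rw [← min_add_add_left]
      exact le_min (le_add_of_nonneg_left (sum_nonneg fun S hS => hg₁ S hS _))
        (one_le_add_fiberInf_of_cut hunion hinter hcut hg x)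
    dsimp only at e hsplit ⊢
    linarith
  · rcases eq_or_ne S J with rfl | hSJ
    · simpa only [Function.update_self, sub_nonneg] using min_le_left _ _
    · simpa [Function.update_of_ne hSJ] using hg₂ S hS y
  · have e := sum_update_eq_add_sum_erase hJ₂ g (fun y => 1 - k y) fun S u => u (proj m S x)
    have hk : k (proj m J x) ≤ G₂ x := (min_le_right _ _).trans (fiberInf_le J G₂ x)
    dsimp only at e ⊢
    linarith
  · have e₁ := sum_update_eq_add_sum_erase hJ₁ g (fun y => g J y + k y)
      fun S u => ∑ y, u y * p S y
    have e₂ := sum_update_eq_add_sum_erase hJ₂ g (fun y => 1 - k y) fun S u => ∑ y, u y * p S y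
    have hsplit := add_sum_erase 𝕊₁ (fun S => ∑ y, g S y * p S y) hJ₁
    have hdecomp := sum_union_eq_sum_add_sum_erase hinter fun S => ∑ y, g S y * p S y
    simp only [add_mul, sub_mul, one_mul, sum_add_distrib, sum_sub_distrib, hpJ] at e₁ e₂
    rw [hunion] at hdecomp
    simp only [sumExpect]
    linarith

theorem Rix_le_add_of_cut (hunion : 𝕊₁ ∪ 𝕊₂ = 𝕊) (hinter : 𝕊₁ ∩ 𝕊₂ = {J})
    (hcut : 𝕊₁.sup id ∩ 𝕊₂.sup id ⊆ J) (hp : IsFamily m 𝕊 p) :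
    Rix m 𝕊 p ≤ Rix m 𝕊₁ p + Rix m 𝕊₂ p := by
  obtain ⟨hJ₁, hJ₂⟩ := mem_inter.1 (hinter ▸ mem_singleton_self J : J ∈ 𝕊₁ ∩ 𝕊₂)
  have hsub₁ : 𝕊₁ ⊆ 𝕊 := hunion ▸ subset_union_left
  have hsub₂ : 𝕊₂ ⊆ 𝕊 := hunion ▸ subset_union_right
  have hsum : ∀ S ∈ 𝕊, ∑ y, p S y = 1 := fun S hS => (hp S hS).2
  have hbdd : ∀ 𝕊' ⊆ 𝕊, BddAbove (coverValues m 𝕊' p) := fun 𝕊' h𝕊' =>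
    coverValues_bddAbove fun S hS => (hp S (h𝕊' hS)).1
  rw [Rix_eq_sSup_coverValues ⟨J, hsub₁ hJ₁⟩ hsum,
    Rix_eq_sSup_coverValues ⟨J, hJ₁⟩ fun S hS => hsum S (hsub₁ hS),
    Rix_eq_sSup_coverValues ⟨J, hJ₂⟩ fun S hS => hsum S (hsub₂ hS)]
  refine csSup_le (coverValues_nonempty ⟨J, hsub₁ hJ₁⟩) ?_
  rintro _ ⟨g, hg, rfl⟩
  obtain ⟨h₁, h₂, hh₁, hh₂, hsplit⟩ :=
    exists_isCover_add_isCover_of_cut hunion hinter hcut (hsum J (hsub₁ hJ₁)) hg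
  calc 1 - sumExpect 𝕊 p g = (1 - sumExpect 𝕊₁ p h₁) + (1 - sumExpect 𝕊₂ p h₂) := by linarith
    _ ≤ _ := add_le_add (le_csSup (hbdd 𝕊₁ hsub₁) ⟨h₁, hh₁, rfl⟩)
      (le_csSup (hbdd 𝕊₂ hsub₂) ⟨h₂, hh₂, rfl⟩)

end Cut

theorem statement_13_general {d : ℕ} (m : Fin d → ℕ)
    (𝕊 𝕊₁ 𝕊₂ : Finset (Finset (Fin d))) (J : Finset (Fin d))
    (hunion : 𝕊₁ ∪ 𝕊₂ = 𝕊) (hinter : 𝕊₁ ∩ 𝕊₂ = {J})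
    (hcut : 𝕊₁.sup id ∩ 𝕊₂.sup id = J)
    (p : ∀ S : Finset (Fin d), Cell m S → ℝ) (hp : IsFamily m 𝕊 p) :
    max (Rix m 𝕊₁ p) (Rix m 𝕊₂ p) ≤ Rix m 𝕊 p ∧
      Rix m 𝕊 p ≤ Rix m 𝕊₁ p + Rix m 𝕊₂ p := by
  obtain ⟨hJ₁, hJ₂⟩ := mem_inter.1 (hinter ▸ mem_singleton_self J : J ∈ 𝕊₁ ∩ 𝕊₂)
  refine ⟨max_le ?_ ?_, Rix_le_add_of_cut hunion hinter hcut.le hp⟩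
  · exact Rix_mono ⟨J, hJ₁⟩ (hunion ▸ subset_union_left) hp
  · exact Rix_mono ⟨J, hJ₂⟩ (hunion ▸ subset_union_right) hp

/-- Proposition: cut sets. If `J` is a cut set for `𝕊₁` and `𝕊₂`, then
`max(R(P_{𝕊₁}), R(P_{𝕊₂})) ≤ R(P_𝕊) ≤ R(P_{𝕊₁}) + R(P_{𝕊₂})`. -/
theorem statement_13 {d : ℕ} (m : Fin d → ℕ) (hm : ∀ j, 0 < m j)
    (𝕊 𝕊₁ 𝕊₂ : Finset (Finset (Fin d))) (J : Finset (Fin d))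
    (h𝕊 : 𝕊.Nonempty) (hSne : ∀ S ∈ 𝕊, S.Nonempty)
    (hunion : 𝕊₁ ∪ 𝕊₂ = 𝕊) (hinter : 𝕊₁ ∩ 𝕊₂ = {J})
    (hcut : 𝕊₁.sup id ∩ 𝕊₂.sup id = J)
    (p : ∀ S : Finset (Fin d), Cell m S → ℝ) (hp : IsFamily m 𝕊 p) :
    max (Rix m 𝕊₁ p) (Rix m 𝕊₂ p) ≤ Rix m 𝕊 p ∧
      Rix m 𝕊 p ≤ Rix m 𝕊₁ p + Rix m 𝕊₂ p :=
  statement_13_general m 𝕊 𝕊₁ 𝕊₂ J hunion hinter hcut p hp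
end

section
/- For every P_𝕊 ∈ 𝒫_𝕊, the incompatibility index admits the linear-programming dual representation R(P_𝕊) = 1 − max{ ∑_{x ∈ X} p(x) : p : X → [0,∞) such that for every S ∈ 𝕊 and every y_S ∈ X_S, ∑_{x ∈ X : x_S = y_S} p(x) ≤ p_S(y_S) }. -/
open Finset Pointwise

lemma sum_marg {d : ℕ} (m : Fin d → ℕ) (S : Finset (Fin d)) (q : Full m → ℝ) :
    ∑ y : Cell m S, ∑ x, (if proj m S x = y then q x else 0) = ∑ x, q x := by
  rw [Finset.sum_comm]
  refine Finset.sum_congr rfl fun x _ => ?_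
  simp [Finset.sum_ite_eq]


lemma clf_decomp {ι : Type*} [Fintype ι] [DecidableEq ι] {κ : ι → Type*} [∀ i, Fintype (κ i)]
    [∀ i, DecidableEq (κ i)] (f : (∀ i, κ i → ℝ) →L[ℝ] ℝ) (v : ∀ i, κ i → ℝ) :
    f v = ∑ i, ∑ j, v i j * f (Pi.single i (Pi.single j 1) : ∀ i, κ i → ℝ) := by
  have hv : v = ∑ i, ∑ j, v i j • (Pi.single i (Pi.single j 1) : ∀ i, κ i → ℝ) := by
    funext i'
    funext j'
    rw [Finset.sum_apply, Finset.sum_apply]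
    rw [Finset.sum_eq_single i']
    · rw [Finset.sum_apply, Finset.sum_apply, Finset.sum_eq_single j']
      · simp
      · intro b _ hb
        simp [Pi.single_eq_of_ne (Ne.symm hb)]
      · simp
    · intro b _ hb
      simp [Pi.single_eq_of_ne' hb]
    · simp
  conv_lhs => rw [hv]
  rw [map_sum]
  congr 1; funext i
  rw [map_sum]
  congr 1; funext j
  rw [map_smul]
  rfl

abbrev EE {d : ℕ} (m : Fin d → ℕ) : Type := ∀ S : Finset (Fin d), Cell m S → ℝ

noncomputable def Avmap {d : ℕ} (m : Fin d → ℕ) (𝕊 : Finset (Finset (Fin d))) :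
    (Full m → ℝ) →ₗ[ℝ] EE m where
  toFun q := fun S y => if S ∈ 𝕊 then ∑ x, (if proj m S x = y then q x else 0) else 0
  map_add' q r := by
    funext S y
    by_cases h : S ∈ 𝕊
    · simp only [h, if_true, Pi.add_apply, ← Finset.sum_add_distrib]
      refine Finset.sum_congr rfl fun x _ => ?_
      split_ifs <;> simp
    · simp [h]
  map_smul' c q := by
    funext S y
    by_cases h : S ∈ 𝕊
    · simp only [h, if_true, Pi.smul_apply, RingHom.id_apply, smul_eq_mul, Finset.mul_sum]
      refine Finset.sum_congr rfl fun x _ => ?_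
      split_ifs <;> simp
    · simp [h]

lemma Avmap_apply {d : ℕ} (m : Fin d → ℕ) (𝕊 : Finset (Finset (Fin d))) (q : Full m → ℝ)
    (S : Finset (Fin d)) (y : Cell m S) :
    Avmap m 𝕊 q S y = if S ∈ 𝕊 then ∑ x, (if proj m S x = y then q x else 0) else 0 := rfl



lemma weak_duality {d : ℕ} (m : Fin d → ℕ)
    (𝕊 : Finset (Finset (Fin d))) (h𝕊 : 𝕊.Nonempty)
    (p : ∀ S : Finset (Fin d), Cell m S → ℝ) (hp : IsFamily m 𝕊 p)
    (f : ∀ S : Finset (Fin d), Cell m S → ℝ) (hf : GPlus m 𝕊 f)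
    (q : Full m → ℝ) (hq0 : ∀ x, 0 ≤ q x)
    (hqm : ∀ S ∈ 𝕊, ∀ y : Cell m S,
      (∑ x : Full m, if proj m S x = y then q x else 0) ≤ p S y) :
    RL m 𝕊 p f ≤ 1 - ∑ x, q x := by
  obtain ⟨hf1, hf2⟩ := hf
  set n : ℝ := (𝕊.card : ℝ) with hn
  have hn0 : 0 < n := by simpa [hn] using Finset.card_pos.2 h𝕊
  set qm : ∀ S : Finset (Fin d), Cell m S → ℝ :=
    fun S y => ∑ x, (if proj m S x = y then q x else 0) with hqmdef
  -- cross term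
  have hcross : ∀ S ∈ 𝕊, ∑ y, f S y * qm S y = ∑ x, f S (proj m S x) * q x := by
    intro S hS
    simp only [hqmdef, Finset.mul_sum, mul_ite, mul_zero]
    rw [Finset.sum_comm]
    refine Finset.sum_congr rfl fun x _ => ?_
    simp [Finset.sum_ite_eq]
  have hcross2 : 0 ≤ ∑ S ∈ 𝕊, ∑ y, f S y * qm S y := by
    rw [Finset.sum_congr rfl hcross, Finset.sum_comm]
    refine Finset.sum_nonneg fun x _ => ?_
    rw [← Finset.sum_mul]
    exact mul_nonneg (hf2 x) (hq0 x)
  -- per-S lower bound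
  have hperS : ∀ S ∈ 𝕊, (∑ x, q x) - 1 + ∑ y, f S y * qm S y ≤ ∑ y, f S y * p S y := by
    intro S hS
    have h1 : ∑ y, f S y * (p S y - qm S y) ≥ ∑ y, (-1) * (p S y - qm S y) :=
      Finset.sum_le_sum fun y _ => by
        have hge : 0 ≤ p S y - qm S y := by
          have := hqm S hS y; simp only [hqmdef]; linarith
        exact mul_le_mul_of_nonneg_right (hf1 S hS y) hge
    have h2 : ∑ y, (-1 : ℝ) * (p S y - qm S y) = (∑ x, q x) - 1 := by
      have hs1 : ∑ y, p S y = 1 := (hp S hS).2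
      have hs2 : ∑ y, qm S y = ∑ x, q x := sum_marg m S q
      simp only [neg_one_mul, Finset.sum_neg_distrib]
      rw [Finset.sum_sub_distrib, hs1, hs2]
      ring
    have h3 : ∑ y, f S y * (p S y - qm S y) = ∑ y, f S y * p S y - ∑ y, f S y * qm S y := by
      rw [← Finset.sum_sub_distrib]
      refine Finset.sum_congr rfl fun y _ => by ring
    rw [h3, h2] at h1
    linarith [h1]
  have htot : n * ((∑ x, q x) - 1) ≤ ∑ S ∈ 𝕊, ∑ y, f S y * p S y := by
    have hA : ∑ S ∈ 𝕊, (((∑ x, q x) - 1) + ∑ y, f S y * qm S y)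
        ≤ ∑ S ∈ 𝕊, ∑ y, f S y * p S y := Finset.sum_le_sum hperS
    have hB : ∑ S ∈ 𝕊, (((∑ x, q x) - 1) + ∑ y, f S y * qm S y)
        = n * ((∑ x, q x) - 1) + ∑ S ∈ 𝕊, ∑ y, f S y * qm S y := by
      rw [Finset.sum_add_distrib, Finset.sum_const, nsmul_eq_mul, hn]
    linarith [hcross2, hA, hB]
  -- conclude
  rw [RL]
  rw [neg_mul, neg_le, ← hn]
  have : (1 / n) * (n * ((∑ x, q x) - 1)) ≤ (1/n) * ∑ S ∈ 𝕊, ∑ y, f S y * p S y :=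
    mul_le_mul_of_nonneg_left htot (by positivity)
  rw [one_div, inv_mul_cancel_left₀ hn0.ne'] at this
  rw [one_div]
  linarith

set_option maxHeartbeats 1600000 in
/-- linear-programming dual representation of the incompatibility index. -/
theorem statement_17 {d : ℕ} (m : Fin d → ℕ) (hm : ∀ j, 0 < m j)
    (𝕊 : Finset (Finset (Fin d))) (h𝕊 : 𝕊.Nonempty) (hSne : ∀ S ∈ 𝕊, S.Nonempty)
    (p : ∀ S : Finset (Fin d), Cell m S → ℝ) (hp : IsFamily m 𝕊 p) :
    Rix m 𝕊 p =
      1 - sSup {t : ℝ | ∃ q : Full m → ℝ, (∀ x, 0 ≤ q x) ∧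
        (∀ S ∈ 𝕊, ∀ y : Cell m S,
          (∑ x : Full m, if proj m S x = y then q x else 0) ≤ p S y) ∧
        t = ∑ x : Full m, q x} := by
  haveI : ∀ j, NeZero (m j) := fun j => ⟨(hm j).ne'⟩
  set n : ℝ := (𝕊.card : ℝ) with hn
  have hn0 : 0 < n := by
    simpa [hn] using Finset.card_pos.2 h𝕊
  set Pset : Set ℝ := {t : ℝ | ∃ q : Full m → ℝ, (∀ x, 0 ≤ q x) ∧
        (∀ S ∈ 𝕊, ∀ y : Cell m S,
          (∑ x : Full m, if proj m S x = y then q x else 0) ≤ p S y) ∧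
        t = ∑ x : Full m, q x} with hPset
  set RixSet : Set ℝ := {t | ∃ f, GPlus m 𝕊 f ∧ t = RL m 𝕊 p f} with hRixSet
  -- basic facts about Pset
  have h0P : (0 : ℝ) ∈ Pset := by
    refine ⟨fun _ => 0, fun _ => le_refl 0, fun S hS y => ?_, by simp⟩
    simpa using (hp S hS).1 y
  have hPbdd : ∀ t ∈ Pset, t ≤ 1 := by
    rintro t ⟨q, hq0, hqm, rfl⟩
    obtain ⟨S₀, hS₀⟩ := h𝕊
    calc ∑ x, q x = ∑ y : Cell m S₀, ∑ x, (if proj m S₀ x = y then q x else 0) :=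
          (sum_marg m S₀ q).symm
      _ ≤ ∑ y : Cell m S₀, p S₀ y := Finset.sum_le_sum fun y _ => hqm S₀ hS₀ y
      _ = 1 := (hp S₀ hS₀).2
  have hPbddAbove : BddAbove Pset := ⟨1, fun t ht => hPbdd t ht⟩
  set V : ℝ := sSup Pset with hV
  have hV0 : 0 ≤ V := le_csSup hPbddAbove h0P
  have hV1 : V ≤ 1 := csSup_le ⟨0, h0P⟩ hPbdd
  -- weak duality
  have hweak : ∀ f, GPlus m 𝕊 f → ∀ t ∈ Pset, RL m 𝕊 p f ≤ 1 - t := by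
    rintro f hf t ⟨q, hq0, hqm, rfl⟩
    exact weak_duality m 𝕊 h𝕊 p hp f hf q hq0 hqm
  -- Rix set facts
  have h0R : (0 : ℝ) ∈ RixSet := by
    refine ⟨fun _ _ => 0, ⟨fun S _ y => by norm_num, fun x => by simp⟩, ?_⟩
    simp [RL]
  have hRle : ∀ r ∈ RixSet, r ≤ 1 - V := by
    rintro r ⟨f, hf, rfl⟩
    have : V ≤ 1 - RL m 𝕊 p f := csSup_le ⟨0, h0P⟩ fun t ht => by
      have := hweak f hf t ht; linarith
    linarith
  have hRbddAbove : BddAbove RixSet := ⟨1 - V, fun r hr => hRle r hr⟩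
  -- strong duality direction
  have hVP : ∀ q : Full m → ℝ, (∀ x, 0 ≤ q x) →
      (∀ S ∈ 𝕊, ∀ y : Cell m S,
        (∑ x : Full m, if proj m S x = y then q x else 0) ≤ p S y) → ∑ x, q x ≤ V := by
    intro q hq0 hqm
    exact le_csSup hPbddAbove ⟨q, hq0, hqm, rfl⟩
  have hstrong : ∀ ε : ℝ, 0 < ε → ∃ r ∈ RixSet, 1 - V - ε < r := by
    intro ε hε
    set t : ℝ := V + ε with ht
    have ht0 : 0 < t := by linarith
    -- the compact simplex
    set Q : Set (Full m → ℝ) := {q | (∀ x, 0 ≤ q x) ∧ ∑ x, q x = t} with hQ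
    have hQclosed : IsClosed Q := by
      have h1 : IsClosed {q : Full m → ℝ | ∀ x, 0 ≤ q x} := by
        have : {q : Full m → ℝ | ∀ x, 0 ≤ q x} = ⋂ x, {q | 0 ≤ q x} := by ext; simp [Set.mem_iInter]
        rw [this]
        exact isClosed_iInter fun x => isClosed_le continuous_const (continuous_apply x)
      have h2 : IsClosed {q : Full m → ℝ | ∑ x, q x = t} :=
        isClosed_eq (continuous_finset_sum _ fun x _ => continuous_apply x) continuous_const
      exact (h1.inter h2 : _)
    have hQcompact : IsCompact Q := by
      refine IsCompact.of_isClosed_subset (isCompact_univ_pi fun _ => (isCompact_Icc : IsCompact (Set.Icc (0:ℝ) t))) hQclosed ?_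
      rintro q ⟨hq0, hqs⟩ x _
      refine ⟨hq0 x, ?_⟩
      calc q x ≤ ∑ x', q x' := Finset.single_le_sum (fun i _ => hq0 i) (Finset.mem_univ x)
        _ = t := hqs
    have hQconvex : Convex ℝ Q := by
      rintro q1 ⟨h10, h1s⟩ q2 ⟨h20, h2s⟩ a b ha hb hab
      refine ⟨fun x => add_nonneg (mul_nonneg ha (h10 x)) (mul_nonneg hb (h20 x)), ?_⟩
      simp only [Pi.add_apply, Pi.smul_apply, smul_eq_mul]
      rw [Finset.sum_add_distrib, ← Finset.mul_sum, ← Finset.mul_sum, h1s, h2s]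
      nlinarith
    -- the orthant
    set O : Set (EE m) := {s | ∀ S y, 0 ≤ s S y} with hO
    have hOclosed : IsClosed O := by
      have : O = ⋂ (S : Finset (Fin d)), ⋂ (y : Cell m S), {s : EE m | 0 ≤ s S y} := by
        ext; simp [hO, Set.mem_iInter]
      rw [this]
      exact isClosed_iInter fun S => isClosed_iInter fun y =>
        isClosed_le continuous_const ((continuous_apply y).comp (continuous_apply S))
    have hOconvex : Convex ℝ O := by
      rintro s1 h1 s2 h2 a b ha hb _ S y
      have := h1 S y; have := h2 S y
      simp only [Pi.add_apply, Pi.smul_apply, smul_eq_mul]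
      positivity
    -- the cone section
    set Av := Avmap m 𝕊 with hAv
    set C : Set (EE m) := (⇑Av '' Q) + O with hC
    have hCconvex : Convex ℝ C := Convex.add (hQconvex.linear_image Av) hOconvex
    have hCclosed : IsClosed C :=
      IsClosed.add_left_of_isCompact hOclosed (hQcompact.image Av.continuous_of_finiteDimensional)
    -- the point to separate
    set Pv : EE m := fun S y => if S ∈ 𝕊 then p S y else 0 with hPv
    have hPvnotC : Pv ∉ C := by
      rintro ⟨a, ⟨q, hqQ, rfl⟩, s, hsO, habz⟩
      have hle : ∑ x, q x ≤ V := by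
        refine hVP q hqQ.1 fun S hS y => ?_
        have := congrFun (congrFun habz S) y
        simp only [hPv, hAv, Pi.add_apply, Avmap_apply, hS, if_true] at this
        have hs := hsO S y
        linarith
      rw [hqQ.2] at hle
      linarith
    -- separation
    obtain ⟨F, u, hFC, hFPv⟩ := geometric_hahn_banach_closed_point hCconvex hCclosed hPvnotC
    -- the dual vector
    set g : EE m := fun S y => -F (Pi.single S (Pi.single y 1) : EE m) with hg
    have hdecomp : ∀ v : EE m, F v = -∑ S, ∑ y, v S y * g S y := by
      intro v
      rw [clf_decomp F v]
      rw [← Finset.sum_neg_distrib]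
      refine Finset.sum_congr rfl fun S _ => ?_
      rw [← Finset.sum_neg_distrib]
      refine Finset.sum_congr rfl fun y _ => ?_
      simp [hg]
    -- a base point of Q
    have hcard : 0 < (Fintype.card (Full m) : ℝ) := by
      have : 0 < Fintype.card (Full m) := Fintype.card_pos
      exact_mod_cast this
    set q₀ : Full m → ℝ := fun _ => t / (Fintype.card (Full m) : ℝ) with hq₀
    have hq₀Q : q₀ ∈ Q := by
      constructor
      · intro x
        exact le_of_lt (div_pos ht0 hcard)
      · rw [Finset.sum_const, nsmul_eq_mul, Finset.card_univ, mul_div_cancel₀ _ hcard.ne']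
    -- g is nonnegative
    have hg0 : ∀ S y, 0 ≤ g S y := by
      intro S y
      have hbas : ∀ c : ℝ, 0 ≤ c → (c • (Pi.single S (Pi.single y 1) : EE m)) ∈ O := by
        intro c hc S' y'
        simp only [Pi.smul_apply, smul_eq_mul]
        refine mul_nonneg hc ?_
        by_cases h : S' = S
        · subst h
          rw [Pi.single_eq_same]
          by_cases h' : y' = y
          · subst h'; rw [Pi.single_eq_same]; norm_num
          · rw [Pi.single_eq_of_ne h']
        · rw [Pi.single_eq_of_ne h]
          exact le_refl 0
      have hmem : ∀ c : ℝ, 0 ≤ c →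
          Av q₀ + c • (Pi.single S (Pi.single y 1) : EE m) ∈ C :=
        fun c hc => Set.add_mem_add (Set.mem_image_of_mem (⇑Av) hq₀Q) (hbas c hc)
      by_contra hneg
      push_neg at hneg
      have hFpos : 0 < F (Pi.single S (Pi.single y 1) : EE m) := by
        simp only [hg, Left.neg_neg_iff] at hneg
        linarith [hneg]
      set fb := F (Pi.single S (Pi.single y 1) : EE m) with hfb
      have h0 : F (Av q₀) < u := by
        have := hFC _ (hmem 0 le_rfl)
        simpa using this
      have hc : (0:ℝ) ≤ (u - F (Av q₀)) / fb := le_of_lt (div_pos (sub_pos.2 h0) hFpos)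
      have := hFC _ (hmem _ hc)
      rw [map_add, map_smul, smul_eq_mul, div_mul_cancel₀ _ hFpos.ne'] at this
      linarith
    -- the key quantities
    set W : ℝ := ∑ S ∈ 𝕊, ∑ y, g S y * p S y with hW
    have hW0 : 0 ≤ W :=
      Finset.sum_nonneg fun S hS => Finset.sum_nonneg fun y _ =>
        mul_nonneg (hg0 S y) ((hp S hS).1 y)
    have hFPveq : F Pv = -W := by
      rw [hdecomp Pv, neg_inj, hW]
      rw [← Finset.sum_subset (Finset.subset_univ 𝕊)]
      · refine Finset.sum_congr rfl fun S hS => Finset.sum_congr rfl fun y _ => ?_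
        simp [hPv, hS, mul_comm]
      · intro S _ hS
        refine Finset.sum_eq_zero fun y _ => ?_
        simp [hPv, hS]
    have hαW : W < -u := by rw [hFPveq] at hFPv; linarith
    have hα0 : 0 < -u := lt_of_le_of_lt hW0 hαW
    -- evaluation on delta measures
    set h : Full m → ℝ := fun x => ∑ S ∈ 𝕊, g S (proj m S x) with hh
    have hdelta : ∀ x : Full m, -u < t * h x := by
      intro x
      set qx : Full m → ℝ := fun x' => if x' = x then t else 0 with hqx
      have hqxQ : qx ∈ Q := by
        constructor
        · intro x'
          by_cases hx' : x' = x <;> simp [hqx, hx', le_of_lt ht0]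
        · simp [hqx, Finset.sum_ite_eq']
      have h0O : (0 : EE m) ∈ O := fun S y => le_refl 0
      have hmem : Av qx + 0 ∈ C := Set.add_mem_add (Set.mem_image_of_mem (⇑Av) hqxQ) h0O
      have hlt := hFC _ hmem
      rw [add_zero, hdecomp] at hlt
      have heval : ∑ S, ∑ y, (Av qx) S y * g S y = t * h x := by
        rw [hh, Finset.mul_sum]
        rw [← Finset.sum_subset (Finset.subset_univ 𝕊)]
        · refine Finset.sum_congr rfl fun S hS => ?_
          have hone : ∀ y : Cell m S, (Av qx) S y = if proj m S x = y then t else 0 := by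
            intro y
            rw [Avmap_apply, if_pos hS]
            rw [Finset.sum_eq_single x]
            · simp [hqx]
            · intro b _ hb; simp [hqx, hb]
            · simp
          rw [Finset.sum_congr rfl fun y _ => by rw [hone y]]
          simp only [ite_mul, zero_mul, Finset.sum_ite_eq, Finset.mem_univ, if_true]
        · intro S _ hS
          refine Finset.sum_eq_zero fun y _ => ?_
          rw [Avmap_apply, if_neg hS, zero_mul]
      rw [heval] at hlt
      linarith
    -- minimum of h
    obtain ⟨x₀, _, hx₀⟩ := Finset.exists_min_image Finset.univ h ⟨Classical.arbitrary (Full m), Finset.mem_univ _⟩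
    set β : ℝ := h x₀ with hβ
    have hβmin : ∀ x, β ≤ h x := fun x => hx₀ x (Finset.mem_univ x)
    have htβ : -u < t * β := hdelta x₀
    have hβ0 : 0 < β := by nlinarith
    -- the dual feasible family
    refine ⟨RL m 𝕊 p (fun S y => n * (g S y / β) - 1),
      ⟨fun S y => n * (g S y / β) - 1, ⟨?_, ?_⟩, rfl⟩, ?_⟩
    · intro S _ y
      have : 0 ≤ n * (g S y / β) := mul_nonneg hn0.le (div_nonneg (hg0 S y) hβ0.le)
      linarith
    · intro x
      have hsum : ∑ S ∈ 𝕊, (n * (g S (proj m S x) / β) - 1) = (n / β) * h x - n := by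
        rw [Finset.sum_sub_distrib, Finset.sum_const, nsmul_eq_mul, mul_one, hh, Finset.mul_sum]
        congr 1
        refine Finset.sum_congr rfl fun S _ => by ring
      rw [hsum]
      have : n ≤ (n / β) * h x := by
        calc n = (n / β) * β := by field_simp
          _ ≤ (n / β) * h x := by
              exact mul_le_mul_of_nonneg_left (hβmin x) (div_nonneg hn0.le hβ0.le)
      linarith
    · -- value of RL
      have hval : ∀ S ∈ 𝕊, ∑ y, (n * (g S y / β) - 1) * p S y
          = (n / β) * (∑ y, g S y * p S y) - 1 := by
        intro S hS
        calc ∑ y, (n * (g S y / β) - 1) * p S y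
            = ∑ y, ((n / β) * (g S y * p S y) - p S y) :=
              Finset.sum_congr rfl fun y _ => by ring
          _ = (n / β) * (∑ y, g S y * p S y) - ∑ y, p S y := by
              rw [Finset.sum_sub_distrib, Finset.mul_sum]
          _ = (n / β) * (∑ y, g S y * p S y) - 1 := by rw [(hp S hS).2]
      have hRL : RL m 𝕊 p (fun S y => n * (g S y / β) - 1) = 1 - W / β := by
        have e1 : ∑ S ∈ 𝕊, ∑ y, (n * (g S y / β) - 1) * p S y = (n / β) * W - n := by
          rw [Finset.sum_congr rfl hval, Finset.sum_sub_distrib, Finset.sum_const, nsmul_eq_mul,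
            mul_one, ← Finset.mul_sum, ← hW, ← hn]
        rw [RL, e1, ← hn]
        field_simp
        ring
      rw [hRL]
      have hWβ : W / β < t := by
        rw [div_lt_iff₀ hβ0]
        nlinarith
      rw [ht] at hWβ
      linarith

  -- conclude
  have h1 : Rix m 𝕊 p ≤ 1 - V := csSup_le ⟨0, h0R⟩ hRle
  have h2 : 1 - V ≤ Rix m 𝕊 p := by
    by_contra hcon
    push_neg at hcon
    obtain ⟨r, hrR, hr⟩ := hstrong (1 - V - Rix m 𝕊 p) (by linarith)
    have hRixEq : Rix m 𝕊 p = sSup RixSet := rfl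
    have := le_csSup hRbddAbove hrR
    linarith
  have : Rix m 𝕊 p = 1 - V := le_antisymm h1 h2
  rw [this]
end
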